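/- arXiv:2410.17872 — 5 statements merged into one kernel-verified Lean document; each statement's English description precedes it below -/
import Mathlib

section
/- Let C(I) be a decreasing monomial code, let g be the monomial in I of smallest row index, let A = {f ∈ I : f ≺_o g and [f] < τ}, and let B = I ∖ ({g} ∪ A). Then the action of the subgroup LTA(n,2)_g on the set S = { ev(g) + Σ_{h∈A} a_h·ev(h) + C(B) : (a_h)_{h∈A} ∈ {0,1}^A } of cosets of C(B) is transitive; in particular, all cosets in S have the same weight distribution. -/
open Finset

/-! Common setup: `R_n = F_2[x_0,…,x_{n−1}]/(x_i^2 − x_i)`.  A (squarefree) monomial is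
identified with its index set `ind(g) ⊆ {0,…,n−1}`.  Reduced elements of `R_n` are
identified, via the (bijective) evaluation map `ev`, with Boolean functions
`F_2^n → F_2`, i.e. with vectors in `F_2^N` indexed by the points of `F_2^n`. -/

/-- Monomials of `M_n`, identified with their index sets. -/
abbrev Mon (n : ℕ) := Finset (Fin n)

/-- Points of `F_2^n`. -/
abbrev Pt (n : ℕ) := Fin n → ZMod 2

/-- Elements of `R_n` (equivalently, vectors of `F_2^N`), identified with Boolean
functions via the evaluation map `ev`. -/
abbrev BF (n : ℕ) := Pt n → ZMod 2

variable {n : ℕ}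

/-- `ev` of the monomial `∏_{i ∈ S} x_i`. -/
def evm (S : Mon n) : BF n := fun x => ∏ i ∈ S, x i

/-- The coefficient `⟨f⟩_S` of the monomial `S` in the reduced polynomial represented by
the Boolean function `f` (binary Möbius inversion: `⟨f⟩_S = ∑_{supp x ⊆ S} f(x)`). -/
def mcoeff (f : BF n) (S : Mon n) : ZMod 2 :=
  ∑ x ∈ Finset.univ.filter (fun x : Pt n => ∀ i ∉ S, x i = 0), f x

/-- The row index `[g] = ∑_{i ∉ ind(g)} 2^i` of a monomial. -/
def rowIdx (S : Mon n) : ℕ := ∑ i ∈ Sᶜ, 2 ^ (i : ℕ)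

/-- `Ovd h g` means `h ≺_o g`: `h` is a one-variable descendant of `g`, i.e. `g = h·x_i`
for some `i ∉ ind(h)`, or `g = q·x_i`, `h = q·x_j` for a monomial `q` and `j < i`. -/
def Ovd (h g : Mon n) : Prop :=
  (∃ i ∉ h, g = insert i h) ∨
  (∃ (q : Mon n) (i j : Fin n), i ∉ q ∧ j ∉ q ∧ j < i ∧ g = insert i q ∧ h = insert j q)

/-- The standard partial order `≼` on monomials: `g ≼ h` iff some divisor `h'` of `h` with
`deg h' = deg g` dominates `g` coordinatewise after sorting the index lists increasingly. -/
def MonLE (g h : Mon n) : Prop :=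
  ∃ h' ⊆ h, h'.card = g.card ∧
    List.Forall₂ (· ≤ ·) (Finset.sort g (· ≤ ·)) (Finset.sort h' (· ≤ ·))

/-- `C(I)` is a decreasing monomial code. -/
def DecMonCode (I : Set (Mon n)) : Prop := ∀ h ∈ I, ∀ g, MonLE g h → g ∈ I

/-- The monomial code `C(I)`: the `F_2`-span of `{ev(g) : g ∈ I}`. -/
def code (I : Set (Mon n)) : Set (BF n) := ↑(Submodule.span (ZMod 2) (evm '' I))

/-- An element `(A,b)` of `LTA(n,2)`: `A` lower triangular with unit diagonal. -/
structure LTA (n : ℕ) where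
  A : Matrix (Fin n) (Fin n) (ZMod 2)
  b : Pt n
  diag : ∀ i, A i i = 1
  lower : ∀ i j : Fin n, i < j → A i j = 0

/-- The affine map `x ↦ Ax + b` on points. -/
def LTA.actPt (L : LTA n) (x : Pt n) : Pt n := L.A.mulVec x + L.b

/-- The action of `(A,b)` on `R_n` (equivalently on `F_2^N`):
`((A,b)·f)(x) = f(Ax+b)`, so that `(A,b)·ev(f) = ev((A,b)·f)`. -/
def LTA.act (L : LTA n) (f : BF n) : BF n := fun x => f (L.actPt x)

/-- Hamming weight. -/
def wt (f : BF n) : ℕ := (Finset.univ.filter (fun x => f x ≠ 0)).card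

/-- Weight distribution of a set of vectors: `d ↦ |{x ∈ S : wt x = d}|`. -/
noncomputable def wdist (S : Set (BF n)) : ℕ → ℕ := fun d => Nat.card {x : BF n // x ∈ S ∧ wt x = d}

/-- Membership in the subgroup `LTA(n,2)_g`: `a_{i,j} = 0` whenever `i ∉ ind(g)` or
`j ∈ ind(g)` (for off-diagonal entries), and `b_i = 0` whenever `i ∉ ind(g)`. -/
def InSubG (g : Mon n) (L : LTA n) : Prop :=
  (∀ i j : Fin n, i ≠ j → (i ∉ g ∨ j ∈ g) → L.A i j = 0) ∧
  (∀ i : Fin n, i ∉ g → L.b i = 0)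
/-! The elements of `LTA(n,2)_g` are involutions `x ↦ x + δ(x)` with `δ(x)` supported on `ind(g)`
and depending only on the coordinates outside `ind(g)`; they form a group. For every `d ∈ A`
there is an elementary element of this group (the translation `x_i ↦ x_i + 1` if `g = d·x_i`, the
transvection `x_i ↦ x_i + x_j` if `g = q·x_i`, `d = q·x_j`) sending `ev(g)` to `ev(g) + ev(d)`
and every other `h ∈ I` to `ev(h) + ev(h')` or `ev(h)`, where `h' ≼ h` lies one step further
from `g` than `h`. Since `C(I)` is decreasing and `[g]` is minimal, such an `h'` lies in `B`. So
these elements fix every `ev(h)`, `h ∈ I ∖ {g}`, modulo `C(B)`, and their composites move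
`ev(g) + C(B)` to every coset in `S`. Weight distributions are preserved because the action
permutes coordinates. -/

open Submodule

section ModuloSubmodule

variable {R V : Type*} [Ring R] [AddCommGroup V] [Module R V] {K W : Submodule R V}
  {φ ψ : V →ₗ[R] V}

lemma sub_mem_of_mem_span {s : Set V} (h : ∀ v ∈ s, φ v - v ∈ K) {u : V}
    (hu : u ∈ span R s) : φ u - u ∈ K := by
  have hle : span R s ≤ K.comap (φ - LinearMap.id) := span_le.2 h
  exact hle hu

lemma comp_apply_sub_mem (hKW : K ≤ W) (hφ : ∀ u ∈ W, φ u - u ∈ K) (hψ : ∀ u ∈ W, ψ u - u ∈ K)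
    {u : V} (hu : u ∈ W) : φ (ψ u) - u ∈ K := by
  convert K.add_mem (K.add_mem (hφ _ (hKW (hψ u hu))) (hψ u hu)) (hφ u hu) using 1
  rw [map_sub]
  abel

lemma comp_apply_sub_sub_mem (hKW : K ≤ W) (hφ : ∀ u ∈ W, φ u - u ∈ K) {u w₁ w₂ : V}
    (hw₂ : w₂ ∈ W) (h₁ : φ u - u - w₁ ∈ K) (h₂ : ψ u - u - w₂ ∈ K) :
    φ (ψ u) - u - (w₁ + w₂) ∈ K := by
  have hψu : ψ u - u ∈ W := by simpa using W.add_mem (hKW h₂) hw₂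
  convert K.add_mem (K.add_mem (hφ _ hψu) h₂) h₁ using 1
  rw [map_sub]
  abel

lemma image_coset_eq_of_involutive (hφ : Function.Involutive φ) (hK : ∀ k ∈ K, φ k ∈ K) {y z : V}
    (h : φ y - z ∈ K) : φ '' ((y + ·) '' K) = (z + ·) '' K := by
  ext v
  constructor
  · rintro ⟨_, ⟨k, hk, rfl⟩, rfl⟩
    exact ⟨φ y - z + φ k, K.add_mem h (hK k hk), by
      show z + (φ y - z + φ k) = φ (y + k)
      rw [map_add]; abel⟩
  · rintro ⟨k, hk, rfl⟩
    have hk' : φ (z + k - φ y) ∈ K := hK _ (by convert K.sub_mem hk h using 1; abel)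
    refine ⟨φ (z + k), ⟨φ (z + k - φ y), hk', ?_⟩, hφ _⟩
    show y + φ (z + k - φ y) = φ (z + k)
    rw [map_sub, hφ]
    abel

end ModuloSubmodule

lemma evm_insert (j : Fin n) (s : Mon n) (x : Pt n) : evm (insert j s) x = x j * evm s x := by
  by_cases hj : j ∈ s
  · rw [Finset.insert_eq_self.2 hj, evm, ← Finset.mul_prod_erase s _ hj, ← mul_assoc,
      (by decide : ∀ a : ZMod 2, a * a = a)]
  · exact Finset.prod_insert hj

lemma evm_add_single (s : Mon n) (i : Fin n) (c : ZMod 2) (x : Pt n) :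
    evm s (x + Pi.single i c) = evm s x + if i ∈ s then c * evm (s.erase i) x else 0 := by
  have hoff : ∀ k ≠ i, (x + Pi.single i c : Pt n) k = x k := fun k hk => by simp [hk]
  split_ifs with hi
  · simp only [evm, ← Finset.mul_prod_erase s _ hi]
    rw [Finset.prod_congr rfl fun k hk => hoff k (Finset.ne_of_mem_erase hk)]
    simp only [Pi.add_apply, Pi.single_eq_same]
    ring
  · exact (Finset.prod_congr rfl fun k hk => hoff k (ne_of_mem_of_not_mem hk hi)).trans
      (add_zero _).symm

abbrev codeSubmodule (I : Set (Mon n)) : Submodule (ZMod 2) (BF n) := span (ZMod 2) (evm '' I)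

namespace LTA

def actLin (L : LTA n) : BF n →ₗ[ZMod 2] BF n := LinearMap.funLeft (ZMod 2) (ZMod 2) L.actPt

@[simp] lemma actLin_apply (L : LTA n) (f : BF n) : L.actLin f = L.act f := rfl

instance : One (LTA n) :=
  ⟨⟨1, 0, Matrix.one_apply_eq, fun _ _ h => Matrix.one_apply_ne h.ne⟩⟩

lemma one_act (f : BF n) : (1 : LTA n).act f = f := by
  funext x
  show f ((1 : Matrix (Fin n) (Fin n) (ZMod 2)).mulVec x + 0) = f x
  rw [Matrix.one_mulVec, add_zero]

lemma blockTriangular_A (L : LTA n) : L.A.BlockTriangular OrderDual.toDual :=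
  fun _ _ h => L.lower _ _ h

def comp (L M : LTA n) : LTA n where
  A := M.A * L.A
  b := M.A.mulVec L.b + M.b
  diag i := by
    rw [Matrix.mul_apply, Finset.sum_eq_single i (fun k _ hk => ?_) (by simp), M.diag, L.diag,
      one_mul]
    rcases hk.lt_or_gt with hk | hk
    · rw [L.lower k i hk, mul_zero]
    · rw [M.lower i k hk, zero_mul]
  lower _ _ h := M.blockTriangular_A.mul L.blockTriangular_A h

lemma act_comp (L M : LTA n) (f : BF n) : (L.comp M).act f = L.act (M.act f) := by
  funext x
  simp only [act, actPt, comp, Matrix.mulVec_add, Matrix.mulVec_mulVec, add_assoc]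

def transvection (i j : Fin n) (hji : j < i) : LTA n where
  A := Matrix.transvection i j 1
  b := 0
  diag k := by
    simp only [Matrix.transvection, Matrix.add_apply, Matrix.one_apply_eq, Matrix.single_apply]
    rw [if_neg (fun h => hji.ne (h.2.trans h.1.symm)), add_zero]
  lower _ _ h := Matrix.blockTriangular_transvection' (b := id) hji.le 1 h

def translation (i : Fin n) : LTA n where
  A := 1
  b := Pi.single i 1
  diag := Matrix.one_apply_eq
  lower _ _ h := Matrix.one_apply_ne h.ne

lemma transvection_actPt {i j : Fin n} (hji : j < i) (x : Pt n) :
    (transvection i j hji).actPt x = x + Pi.single i (x j) := by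
  simp [actPt, transvection, Matrix.transvection, Matrix.add_mulVec, Matrix.single_mulVec]
  rfl

lemma translation_actPt (i : Fin n) (x : Pt n) :
    (translation i).actPt x = x + Pi.single i 1 := by
  simp [actPt, translation]

lemma transvection_act_evm_sub {i j : Fin n} (hji : j < i) (s : Mon n) :
    (transvection i j hji).act (evm s) - evm s =
      if i ∈ s then evm (insert j (s.erase i)) else 0 := by
  funext x
  simp only [act, transvection_actPt, evm_add_single, Pi.sub_apply, add_sub_cancel_left]
  split_ifs <;> simp [evm_insert]

lemma translation_act_evm_sub (i : Fin n) (s : Mon n) :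
    (translation i).act (evm s) - evm s = if i ∈ s then evm (s.erase i) else 0 := by
  funext x
  simp only [act, translation_actPt, evm_add_single, Pi.sub_apply, add_sub_cancel_left]
  split_ifs <;> simp

end LTA

namespace InSubG

variable {g : Mon n} {L M : LTA n}

lemma A_apply_of_notMem (hL : InSubG g L) {k : Fin n} (hk : k ∉ g) (l : Fin n) :
    L.A k l = (1 : Matrix (Fin n) (Fin n) (ZMod 2)) k l := by
  rcases eq_or_ne k l with rfl | hkl
  · rw [L.diag, Matrix.one_apply_eq]
  · rw [hL.1 k l hkl (Or.inl hk), Matrix.one_apply_ne hkl]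

lemma A_apply_of_mem (hL : InSubG g L) {l : Fin n} (hl : l ∈ g) (k : Fin n) :
    L.A k l = (1 : Matrix (Fin n) (Fin n) (ZMod 2)) k l := by
  rcases eq_or_ne k l with rfl | hkl
  · rw [L.diag, Matrix.one_apply_eq]
  · rw [hL.1 k l hkl (Or.inr hl), Matrix.one_apply_ne hkl]

lemma mulVec_eq_self (hL : InSubG g L) {y : Pt n} (hy : ∀ k ∉ g, y k = 0) : L.A.mulVec y = y := by
  refine .trans ?_ (Matrix.one_mulVec y)
  ext k
  simp only [Matrix.mulVec, dotProduct]
  refine Finset.sum_congr rfl fun m _ => ?_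
  by_cases hm : m ∈ g
  · rw [hL.A_apply_of_mem hm]
  · rw [hy m hm, mul_zero, mul_zero]

lemma actPt_apply_of_notMem (hL : InSubG g L) (x : Pt n) {k : Fin n} (hk : k ∉ g) :
    L.actPt x k = x k := by
  have hrow : (fun l => L.A k l) = fun l => (1 : Matrix (Fin n) (Fin n) (ZMod 2)) k l :=
    funext (hL.A_apply_of_notMem hk)
  show L.A.mulVec x k + L.b k = x k
  rw [Matrix.mulVec, hrow, hL.2 k hk, add_zero]
  exact congrFun (Matrix.one_mulVec x) k

lemma actPt_add (hL : InSubG g L) (x : Pt n) {y : Pt n} (hy : ∀ k ∉ g, y k = 0) :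
    L.actPt (x + y) = L.actPt x + y := by
  simp only [LTA.actPt, Matrix.mulVec_add, hL.mulVec_eq_self hy]
  abel

lemma actPt_involutive (hL : InSubG g L) : Function.Involutive L.actPt := by
  intro x
  have hsupp : ∀ k ∉ g, (L.actPt x - x) k = 0 := fun k hk => by
    rw [Pi.sub_apply, hL.actPt_apply_of_notMem x hk, sub_self]
  calc L.actPt (L.actPt x) = L.actPt (x + (L.actPt x - x)) := by rw [add_sub_cancel]
    _ = L.actPt x + L.actPt x - x := by rw [hL.actPt_add x hsupp, add_sub_assoc]
    _ = x := funext fun k => by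
      rw [Pi.sub_apply, Pi.add_apply, CharTwo.add_self_eq_zero, zero_sub, CharTwo.neg_eq]

lemma act_involutive (hL : InSubG g L) : Function.Involutive L.act :=
  fun f => funext fun x => congrArg f (hL.actPt_involutive x)

lemma wt_act (hL : InSubG g L) (f : BF n) : wt (L.act f) = wt f :=
  Finset.card_bijective L.actPt hL.actPt_involutive.bijective fun x => by
    simp only [Finset.mem_filter, Finset.mem_univ, true_and]; exact Iff.rfl

lemma one : InSubG g (1 : LTA n) :=
  ⟨fun _ _ hkl _ => Matrix.one_apply_ne hkl, fun _ _ => rfl⟩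

lemma comp (hL : InSubG g L) (hM : InSubG g M) : InSubG g (L.comp M) := by
  refine ⟨fun k l hkl hkl' => ?_, fun k hk => ?_⟩
  · show (M.A * L.A) k l = 0
    rcases hkl' with hk | hl
    · simp_rw [Matrix.mul_apply, hM.A_apply_of_notMem hk, ← Matrix.mul_apply, Matrix.one_mul]
      exact hL.1 k l hkl (Or.inl hk)
    · simp_rw [Matrix.mul_apply, hL.A_apply_of_mem hl, ← Matrix.mul_apply, Matrix.mul_one]
      exact hM.1 k l hkl (Or.inr hl)
  · show (M.A.mulVec L.b + M.b) k = 0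
    rw [hM.mulVec_eq_self hL.2, Pi.add_apply, hL.2 k hk, hM.2 k hk, add_zero]

lemma transvection {i j : Fin n} (hji : j < i) (hig : i ∈ g) (hjg : j ∉ g) :
    InSubG g (LTA.transvection i j hji) := by
  refine ⟨fun k l hkl hkl' => ?_, fun _ _ => rfl⟩
  show (1 + Matrix.single i j 1 : Matrix (Fin n) (Fin n) (ZMod 2)) k l = 0
  rw [Matrix.add_apply, Matrix.one_apply_ne hkl, zero_add, Matrix.single_apply, if_neg]
  rintro ⟨rfl, rfl⟩
  rcases hkl' with hk | hl
  exacts [hk hig, hjg hl]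

lemma translation {i : Fin n} (hig : i ∈ g) : InSubG g (LTA.translation i) :=
  ⟨fun _ _ hkl _ => Matrix.one_apply_ne hkl, fun _ hk =>
    Pi.single_eq_of_ne (ne_of_mem_of_not_mem hig hk).symm 1⟩

end InSubG

lemma wdist_image {φ : BF n → BF n} (hφ : Function.Injective φ) (hwt : ∀ f, wt (φ f) = wt f)
    (s : Set (BF n)) : wdist (φ '' s) = wdist s := by
  funext d
  have himage : {x | x ∈ φ '' s ∧ wt x = d} = φ '' {x | x ∈ s ∧ wt x = d} := by
    ext x
    constructor
    · rintro ⟨⟨y, hy, rfl⟩, hd⟩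
      exact ⟨y, ⟨hy, (hwt y).symm.trans hd⟩, rfl⟩
    · rintro ⟨y, ⟨hy, hd⟩, rfl⟩
      exact ⟨⟨y, hy, rfl⟩, (hwt y).trans hd⟩
  show Nat.card {x | x ∈ φ '' s ∧ wt x = d} = Nat.card {x | x ∈ s ∧ wt x = d}
  rw [Nat.card_coe_set_eq, himage, Set.ncard_image_of_injective _ hφ, Nat.card_coe_set_eq]

lemma Ovd.card_sdiff {f g : Mon n} (h : Ovd f g) : (g \ f).card = 1 := by
  rcases h with ⟨i, hif, rfl⟩ | ⟨q, i, j, hiq, hjq, hji, rfl, rfl⟩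
  · rw [Finset.insert_sdiff_of_notMem _ hif, Finset.sdiff_self, insert_empty_eq, card_singleton]
  · have hi : i ∉ insert j q := by simp [hiq, hji.ne']
    rw [Finset.insert_sdiff_of_notMem _ hi,
      Finset.sdiff_eq_empty_iff_subset.2 (Finset.subset_insert j q), insert_empty_eq,
      card_singleton]

lemma Ovd.ne {f g : Mon n} (h : Ovd f g) : f ≠ g := by
  rintro rfl
  simpa using h.card_sdiff

lemma card_sdiff_erase {g h : Mon n} {i : Fin n} (hig : i ∈ g) (hih : i ∈ h) :
    (g \ h.erase i).card = (g \ h).card + 1 := by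
  rw [sdiff_erase hig, card_insert_of_notMem fun hi => (mem_sdiff.1 hi).2 hih]

lemma rowIdx_lt_of_ssubset {g h : Mon n} (hss : g ⊂ h) : rowIdx h < rowIdx g := by
  obtain ⟨a, hah, hag⟩ := Finset.exists_of_ssubset hss
  exact Finset.sum_lt_sum_of_subset (Finset.compl_subset_compl.2 hss.subset)
    (Finset.mem_compl.2 hag) (by simp [hah]) (pow_pos two_pos _) fun _ _ _ => Nat.zero_le _

lemma forall₂_sort_insert_erase {α : Type*} [LinearOrder α] (s : Finset α) :
    ∀ i ∈ s, ∀ j ∉ s, j < i →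
      List.Forall₂ (· ≤ ·) ((insert j (s.erase i)).sort (· ≤ ·)) (s.sort (· ≤ ·)) := by
  induction s using Finset.induction_on_min with
  | empty => simp
  | insert m s hm ih =>
    intro i hi j hj hji
    have hms : m ∉ s := fun h => lt_irrefl m (hm m h)
    have hjs : j ∉ s := fun h => hj (mem_insert_of_mem h)
    rw [Finset.sort_insert _ (fun b hb => (hm b hb).le) hms]
    rcases mem_insert.1 hi with rfl | his
    · rw [erase_insert hms, Finset.sort_insert _ (fun b hb => (hji.trans (hm b hb)).le) hjs]
      exact .cons hji.le (List.forall₂_same.2 fun _ _ => le_rfl)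
    · have hmi : m ≠ i := fun h => hms (h ▸ his)
      have hm' : ∀ b ∈ s.erase i, m < b := fun b hb => hm b (mem_of_mem_erase hb)
      rw [erase_insert_of_ne hmi]
      rcases lt_or_gt_of_ne (fun h => hj (h ▸ mem_insert_self m s) : j ≠ m) with hjm | hmj
      · rw [Finset.sort_insert _ ?_ (by simp [hjs, hjm.ne])]
        · exact .cons hjm.le (ih i his m hms (hm i his))
        · simp only [mem_insert, forall_eq_or_imp]
          exact ⟨hjm.le, fun b hb => (hjm.trans (hm' b hb)).le⟩
      · rw [insert_comm, Finset.sort_insert _ ?_ (by simp [hms, hmj.ne])]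
        · exact .cons le_rfl (ih i his j hjs hji)
        · simp only [mem_insert, forall_eq_or_imp]
          exact ⟨hmj.le, fun b hb => (hm' b hb).le⟩

lemma monLE_of_subset {t s : Mon n} (h : t ⊆ s) : MonLE t s :=
  ⟨t, h, rfl, List.forall₂_same.2 fun _ _ => le_rfl⟩

lemma monLE_insert_erase {s : Mon n} {i j : Fin n} (hi : i ∈ s) (hj : j ∉ s) (hji : j < i) :
    MonLE (insert j (s.erase i)) s := by
  refine ⟨s, subset_rfl, ?_, forall₂_sort_insert_erase s i hi j hj hji⟩
  rw [card_insert_of_notMem (fun h => hj (mem_of_mem_erase h)), card_erase_of_mem hi,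
    Nat.sub_add_cancel (card_pos.2 ⟨i, hi⟩)]

section Orbit

variable {I A : Set (Mon n)} {g : Mon n}

/-- `h'` is not a one-variable descendant of `g`: that would force `g ⊂ h`, against the minimality
of `[g]`. -/
lemma mem_sdiff_of_monLE (hdec : DecMonCode I) (hgmin : ∀ f ∈ I, rowIdx g ≤ rowIdx f)
    (hA : ∀ f ∈ A, Ovd f g) {h h' : Mon n} (hh : h ∈ I \ {g}) (hle : MonLE h' h)
    (hcard : (g \ h').card = (g \ h).card + 1) : h' ∈ I \ ({g} ∪ A) := by
  refine ⟨hdec h hh.1 h' hle, ?_⟩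
  rintro (rfl | hA')
  · simp at hcard
  · have hgh : g ⊆ h := sdiff_eq_empty_iff_subset.1 <| card_eq_zero.1 <| by
      have := (hA h' hA').card_sdiff
      omega
    exact (hgmin h hh.1).not_gt (rowIdx_lt_of_ssubset (hgh.ssubset_of_ne (Ne.symm hh.2)))

lemma transvection_act_evm_sub_mem (hdec : DecMonCode I)
    (hgmin : ∀ f ∈ I, rowIdx g ≤ rowIdx f) (hA : ∀ f ∈ A, Ovd f g) {i j : Fin n} (hji : j < i)
    (hig : i ∈ g) (hjg : j ∉ g)
    {h : Mon n} (hh : h ∈ I \ {g}) :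
    (LTA.transvection i j hji).act (evm h) - evm h ∈ codeSubmodule (I \ ({g} ∪ A)) := by
  rw [LTA.transvection_act_evm_sub]
  split_ifs with hih
  · refine subset_span ⟨_, mem_sdiff_of_monLE hdec hgmin hA hh ?_ ?_, rfl⟩
    · by_cases hjh : j ∈ h
      · rw [insert_eq_of_mem (mem_erase.2 ⟨hji.ne, hjh⟩)]
        exact monLE_of_subset (erase_subset i h)
      · exact monLE_insert_erase hih hjh hji
    · rw [sdiff_insert_of_notMem hjg, card_sdiff_erase hig hih]
  · exact zero_mem _

lemma translation_act_evm_sub_mem (hdec : DecMonCode I)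
    (hgmin : ∀ f ∈ I, rowIdx g ≤ rowIdx f) (hA : ∀ f ∈ A, Ovd f g) {i : Fin n} (hig : i ∈ g)
    {h : Mon n} (hh : h ∈ I \ {g}) :
    (LTA.translation i).act (evm h) - evm h ∈ codeSubmodule (I \ ({g} ∪ A)) := by
  rw [LTA.translation_act_evm_sub]
  split_ifs with hih
  · exact subset_span ⟨_, mem_sdiff_of_monLE hdec hgmin hA hh
      (monLE_of_subset (erase_subset i h)) (card_sdiff_erase hig hih), rfl⟩
  · exact zero_mem _

lemma exists_inSubG_act_evm_sub_eq (hdec : DecMonCode I)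
    (hgmin : ∀ f ∈ I, rowIdx g ≤ rowIdx f) (hA : ∀ f ∈ A, Ovd f g) {d : Mon n} (hd : Ovd d g) :
    ∃ L : LTA n, InSubG g L ∧ L.act (evm g) - evm g = evm d ∧
      ∀ h ∈ I \ {g}, L.act (evm h) - evm h ∈ codeSubmodule (I \ ({g} ∪ A)) := by
  rcases hd with ⟨i, hid, rfl⟩ | ⟨q, i, j, hiq, hjq, hji, rfl, rfl⟩
  · refine ⟨LTA.translation i, .translation (mem_insert_self i d), ?_,
      fun h hh => translation_act_evm_sub_mem hdec hgmin hA (mem_insert_self i d) hh⟩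
    rw [LTA.translation_act_evm_sub, if_pos (mem_insert_self i d), erase_insert hid]
  · have hjg : j ∉ insert i q := by simp [hjq, hji.ne]
    refine ⟨LTA.transvection i j hji, .transvection hji (mem_insert_self i q) hjg, ?_,
      fun h hh => transvection_act_evm_sub_mem hdec hgmin hA hji (mem_insert_self i q) hjg hh⟩
    rw [LTA.transvection_act_evm_sub, if_pos (mem_insert_self i q), erase_insert hiq]

lemma codeSubmodule_sdiff_union_le :
    codeSubmodule (I \ ({g} ∪ A)) ≤ codeSubmodule (I \ {g}) :=
  span_mono (Set.image_mono (Set.sdiff_subset_sdiff_right Set.subset_union_left))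

lemma codeSubmodule_le_of_ovd (hA : ∀ f ∈ A, f ∈ I ∧ Ovd f g) :
    codeSubmodule A ≤ codeSubmodule (I \ {g}) :=
  span_mono (Set.image_mono fun f hf => ⟨(hA f hf).1, (hA f hf).2.ne⟩)

lemma exists_inSubG_act_evm_sub_sub_mem (hdec : DecMonCode I)
    (hgmin : ∀ f ∈ I, rowIdx g ≤ rowIdx f) (hA : ∀ f ∈ A, f ∈ I ∧ Ovd f g) {w : BF n}
    (hw : w ∈ codeSubmodule A) :
    ∃ L : LTA n, InSubG g L ∧
      (∀ u ∈ codeSubmodule (I \ {g}),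
        L.act u - u ∈ codeSubmodule (I \ ({g} ∪ A))) ∧
      L.act (evm g) - evm g - w ∈ codeSubmodule (I \ ({g} ∪ A)) := by
  have hzero : ∃ L : LTA n, InSubG g L ∧
      (∀ u ∈ codeSubmodule (I \ {g}),
        L.act u - u ∈ codeSubmodule (I \ ({g} ∪ A))) ∧
      L.act (evm g) - evm g - 0 ∈ codeSubmodule (I \ ({g} ∪ A)) :=
    ⟨1, .one, fun u _ => by simp [LTA.one_act], by simp [LTA.one_act]⟩
  induction hw using Submodule.span_induction with
  | mem w hw =>
    obtain ⟨d, hd, rfl⟩ := hw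
    obtain ⟨L, hL, hLg, hLfix⟩ :=
      exists_inSubG_act_evm_sub_eq hdec hgmin (fun f hf => (hA f hf).2) (hA d hd).2
    refine ⟨L, hL, fun u hu => sub_mem_of_mem_span (φ := L.actLin) ?_ hu, ?_⟩
    · rintro _ ⟨h, hh, rfl⟩
      exact hLfix h hh
    · rw [hLg, sub_self]
      exact zero_mem _
  | zero => exact hzero
  | add w₁ w₂ hw₁ hw₂ ih₁ ih₂ =>
    obtain ⟨L, hL, hLW, hLg⟩ := ih₁
    obtain ⟨M, hM, hMW, hMg⟩ := ih₂
    refine ⟨L.comp M, hL.comp hM, fun u hu => ?_, ?_⟩ <;> simp only [LTA.act_comp]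
    · exact comp_apply_sub_mem (φ := L.actLin) (ψ := M.actLin) codeSubmodule_sdiff_union_le hLW hMW hu
    · exact comp_apply_sub_sub_mem (φ := L.actLin) (ψ := M.actLin) codeSubmodule_sdiff_union_le hLW
        (codeSubmodule_le_of_ovd hA hw₂) hLg hMg
  | smul c w _ ih =>
    rcases (by decide : ∀ c : ZMod 2, c = 0 ∨ c = 1) c with rfl | rfl
    · simpa using hzero
    · simpa using ih

end Orbit

theorem stmt1_general {n : ℕ} (I : Set (Mon n)) (hdec : DecMonCode I)
    (τ : ℕ)
    (g : Mon n) (hgmin : ∀ f ∈ I, rowIdx g ≤ rowIdx f)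
    (A : Set (Mon n)) (hA : A = {f | f ∈ I ∧ Ovd f g ∧ rowIdx f < τ})
    (B : Set (Mon n)) (hB : B = I \ ({g} ∪ A))
    (S : Set (Set (BF n)))
    (hS : S = {s | ∃ a : Mon n → ZMod 2,
      s = (fun c => evm g + (∑ᶠ h ∈ A, a h • evm h) + c) '' code B}) :
    (∀ s1 ∈ S, ∀ s2 ∈ S, ∃ L : LTA n, InSubG g L ∧ (fun v => L.act v) '' s1 = s2) ∧
    (∀ s1 ∈ S, ∀ s2 ∈ S, wdist s1 = wdist s2) := by
  subst hB
  have hAI : ∀ f ∈ A, f ∈ I ∧ Ovd f g := fun f hf => by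
    rw [hA] at hf
    exact ⟨hf.1, hf.2.1⟩
  have hsum : ∀ a : Mon n → ZMod 2, ∑ᶠ h ∈ A, a h • evm h ∈ codeSubmodule A :=
    fun a => finsum_mem_induction _ (zero_mem _) (fun _ _ => add_mem)
      fun h hh => smul_mem _ _ (subset_span ⟨h, hh, rfl⟩)
  have htrans : ∀ s1 ∈ S, ∀ s2 ∈ S, ∃ L : LTA n, InSubG g L ∧ (fun v => L.act v) '' s1 = s2 := by
    rw [hS]
    rintro _ ⟨a₁, rfl⟩ _ ⟨a₂, rfl⟩
    obtain ⟨L, hL, hLW, hLg⟩ :=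
      exists_inSubG_act_evm_sub_sub_mem hdec hgmin hAI (sub_mem (hsum a₂) (hsum a₁))
    refine ⟨L, hL, image_coset_eq_of_involutive (φ := L.actLin) hL.act_involutive
      (fun k hk => ?_) ?_⟩
    · simpa using add_mem (hLW k (codeSubmodule_sdiff_union_le hk)) hk
    · convert add_mem hLg (hLW _ (codeSubmodule_le_of_ovd hAI (hsum a₁))) using 1
      rw [map_add, LTA.actLin_apply, LTA.actLin_apply]
      abel
  refine ⟨htrans, fun s1 hs1 s2 hs2 => ?_⟩
  obtain ⟨L, hL, rfl⟩ := htrans s1 hs1 s2 hs2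
  exact (wdist_image hL.act_involutive.injective hL.wt_act s1).symm

/-- for a decreasing monomial code `C(I)` with first information bit `g`,
`A = {f ∈ I : f ≺_o g, [f] < τ}` and `B = I ∖ ({g} ∪ A)`, the action of `LTA(n,2)_g` on the
set `S = {ev(g) + ∑_{h∈A} a_h·ev(h) + C(B)}` of cosets of `C(B)` is transitive; in
particular all cosets in `S` have the same weight distribution. -/
theorem stmt1 {n : ℕ} (hn : 1 ≤ n) (I : Set (Mon n)) (hdec : DecMonCode I)
    (τ : ℕ) (hτlt : τ < 2 ^ n) (hτfrozen : τ ∉ rowIdx '' I)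
    (hτmax : ∀ m < 2 ^ n, m ∉ rowIdx '' I → m ≤ τ)
    (g : Mon n) (hg : g ∈ I) (hgmin : ∀ f ∈ I, rowIdx g ≤ rowIdx f)
    (A : Set (Mon n)) (hA : A = {f | f ∈ I ∧ Ovd f g ∧ rowIdx f < τ})
    (B : Set (Mon n)) (hB : B = I \ ({g} ∪ A))
    (S : Set (Set (BF n)))
    (hS : S = {s | ∃ a : Mon n → ZMod 2,
      s = (fun c => evm g + (∑ᶠ h ∈ A, a h • evm h) + c) '' code B}) :
    (∀ s1 ∈ S, ∀ s2 ∈ S, ∃ L : LTA n, InSubG g L ∧ (fun v => L.act v) '' s1 = s2) ∧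
    (∀ s1 ∈ S, ∀ s2 ∈ S, wdist s1 = wdist s2) :=
  stmt1_general I hdec τ g hgmin A hA B hB S hS
end

section
/- For every (A,b) ∈ LTA(n,2)_{h2}^{h1}, the coefficient of (A,b)·h1 vanishes at h2 and at every monomial in (O_{h1}∖O_{h2})∩D, in O_{h1}∩O_{h2}, and in O_{h2}∖O_{h1}∖D; that is, ⟨(A,b)·h1⟩_{h2} = 0, and ⟨(A,b)·h1⟩_f = 0 for all f ∈ ((O_{h1}∖O_{h2})∩D) ∪ (O_{h1}∩O_{h2}) ∪ (O_{h2}∖O_{h1}∖D). -/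
open Finset

variable {n : ℕ}

/-- Membership in the subgroup `LTA(n,2)_{h2}^{h1}`: all strictly-lower-triangular entries of
`A` and all entries of `b` vanish except possibly the free parameters: for
`f ∈ O_{h1}∖O_{h2}∖D`, the entry `a_{s,t}` when `h1 = q·x_s`, `f = q·x_t`, `t < s`, and the
entry `b_r` when `h1 = f·x_r`; for `f ∈ O_{h2}∖O_{h1}∖D`, the entry `a_{s,t}` when
`h2 = q·x_s`, `f = q·x_t`, `t < s`, and the entry `b_r` when `h2 = f·x_r`. -/
def InSub (h1 h2 : Mon n) (O1 O2 D : Set (Mon n)) (L : LTA n) : Prop :=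
  (∀ s t : Fin n, t < s → L.A s t ≠ 0 →
    (∃ f ∈ ((O1 \ O2) \ D), ∃ q : Mon n, s ∉ q ∧ t ∉ q ∧ h1 = insert s q ∧ f = insert t q) ∨
    (∃ f ∈ ((O2 \ O1) \ D), ∃ q : Mon n, s ∉ q ∧ t ∉ q ∧ h2 = insert s q ∧ f = insert t q)) ∧
  (∀ r : Fin n, L.b r ≠ 0 →
    (∃ f ∈ ((O1 \ O2) \ D), r ∉ f ∧ h1 = insert r f) ∨
    (∃ f ∈ ((O2 \ O1) \ D), r ∉ f ∧ h2 = insert r f))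

/-- The standing context: a decreasing monomial code `C(I)` with `n ≥ 1`, last frozen index
`τ = max F` where `F = {0,…,N−1} ∖ {[g] : g ∈ I}`; `h1` the monomial of `I` of smallest row
index; `h2` the monomial of `I` of smallest row index among those with `[h1] < [h2]` that are
not one-variable descendants of `h1`; and the feasibility assumption
`|ind(h1)∖ind(h2)| ≤ 2`, `|ind(h2)∖ind(h1)| ≤ 2`. -/
structure Setup (n : ℕ) where
  npos : 1 ≤ n
  I : Set (Mon n)
  dec : DecMonCode I
  τ : ℕ
  τlt : τ < 2 ^ n
  τfrozen : τ ∉ rowIdx '' I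
  τmax : ∀ m < 2 ^ n, m ∉ rowIdx '' I → m ≤ τ
  h1 : Mon n
  h1mem : h1 ∈ I
  h1min : ∀ g ∈ I, rowIdx h1 ≤ rowIdx g
  h2 : Mon n
  h2mem : h2 ∈ I
  h12 : rowIdx h1 < rowIdx h2
  h2novd : ¬ Ovd h2 h1
  h2min : ∀ g ∈ I, rowIdx h1 < rowIdx g → ¬ Ovd g h1 → rowIdx h2 ≤ rowIdx g
  feas1 : (h1 \ h2).card ≤ 2
  feas2 : (h2 \ h1).card ≤ 2

namespace Setup

variable (C : Setup n)

/-- `O_{h1} = {f ∈ I : f ≺_o h1, [h2] < [f] < τ}`. -/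
def O1 : Set (Mon n) := {f | f ∈ C.I ∧ Ovd f C.h1 ∧ rowIdx C.h2 < rowIdx f ∧ rowIdx f < C.τ}

/-- `O_{h2} = {f ∈ I : f ≺_o h2, [f] < τ}`. -/
def O2 : Set (Mon n) := {f | f ∈ C.I ∧ Ovd f C.h2 ∧ rowIdx f < C.τ}

/-- `O^c_{h1} = {f ∈ I : f ∉ O_{h1}, [h2] < [f] < τ}`. -/
def O1c : Set (Mon n) := {f | f ∈ C.I ∧ f ∉ C.O1 ∧ rowIdx C.h2 < rowIdx f ∧ rowIdx f < C.τ}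

/-- `O^c_{h2} = {f ∈ I : f ∉ O_{h2}, [h2] < [f] < τ}`. -/
def O2c : Set (Mon n) := {f | f ∈ C.I ∧ f ∉ C.O2 ∧ rowIdx C.h2 < rowIdx f ∧ rowIdx f < C.τ}

/-- `D = {f ∈ O_{h1} ∪ O_{h2} : ∏_{j ∈ ind(h1)∩ind(h2)} x_j ∤ f}`. -/
def D : Set (Mon n) := {f | f ∈ C.O1 ∪ C.O2 ∧ ¬ (C.h1 ∩ C.h2 ⊆ f)}

/-- `T = {f ∈ I : [f] > τ}`. -/
def T : Set (Mon n) := {f | f ∈ C.I ∧ C.τ < rowIdx f}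

/-- `B = ((O_{h2}∖O_{h1}) ∩ D) ∪ (O^c_{h1} ∩ O^c_{h2}) ∪ T`. -/
def B : Set (Mon n) := ((C.O2 \ C.O1) ∩ C.D) ∪ (C.O1c ∩ C.O2c) ∪ C.T

/-- `(A,b) ∈ LTA(n,2)_{h2}^{h1}`. -/
def Mem (L : LTA n) : Prop := InSub C.h1 C.h2 C.O1 C.O2 C.D L

/-- `W = {g ∈ O^c_{h1} ∩ O^c_{h2} : ∃ (A,b) ∈ LTA(n,2)_{h2}^{h1}, ∃ p ∈ O_{h1}∖O_{h2}∖D,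
⟨(A,b)·g⟩_p ≠ 0}`. -/
def W : Set (Mon n) :=
  {g | g ∈ C.O1c ∩ C.O2c ∧
    ∃ L : LTA n, C.Mem L ∧ ∃ p ∈ ((C.O1 \ C.O2) \ C.D), mcoeff (L.act (evm g)) p ≠ 0}

/-- `L` and `L'` have equal values on all entries associated with `O_{h2}∖O_{h1}∖D`
in the definition of the subgroup `LTA(n,2)_{h2}^{h1}`. -/
def agreeO2 (L L' : LTA n) : Prop :=
  (∀ f ∈ ((C.O2 \ C.O1) \ C.D), ∀ (q : Mon n) (s t : Fin n),
      s ∉ q → t ∉ q → t < s → C.h2 = insert s q → f = insert t q → L.A s t = L'.A s t) ∧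
  (∀ f ∈ ((C.O2 \ C.O1) \ C.D), ∀ r : Fin n, r ∉ f → C.h2 = insert r f → L.b r = L'.b r)

end Setup


/-! A free entry in row `i` of `(A,b)` with `i ∈ h1 ∩ h2` would turn `h1` into a monomial of
`O_{h1} ∪ O_{h2}` outside `D` that misses `x_i`, which is impossible; so these coordinates are
fixed. Of the at most two coordinates `a > c` of `h1 ∖ h2`, `c` is fixed too, because substituting
it would give a monomial of row index below `[h2]`. Hence `(A,b)·h1 = x_{h1∖a}·(x_a + ∑ a_{a,t} x_t
+ b_a)`, whose monomials are `h1` and members of `O_{h1}∖O_{h2}∖D`, none of which is `h2` or lies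
in the three sets of the statement. -/

lemma rowIdx_eq_add_of_subset {s u : Mon n} (h : s ⊆ u) :
    rowIdx s = rowIdx u + ∑ i ∈ u \ s, 2 ^ (i : ℕ) := by
  rw [rowIdx, rowIdx, ← sum_sdiff (compl_subset_compl.2 h), compl_sdiff_compl, add_comm]

lemma rowIdx_le_of_subset {s u : Mon n} (h : s ⊆ u) : rowIdx u ≤ rowIdx s := by
  rw [rowIdx_eq_add_of_subset h]
  exact Nat.le_add_right _ _

lemma rowIdx_insert {s : Mon n} {t : Fin n} (ht : t ∉ s) :
    rowIdx s = rowIdx (insert t s) + 2 ^ (t : ℕ) := by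
  rw [rowIdx_eq_add_of_subset (subset_insert t s), insert_sdiff_cancel ht, sum_singleton]

lemma Ovd.rowIdx_lt {f g : Mon n} (h : Ovd f g) : rowIdx g < rowIdx f := by
  rcases h with ⟨i, hi, rfl⟩ | ⟨q, i, j, hiq, hjq, hji, rfl, rfl⟩
  · have := rowIdx_insert hi
    have : 0 < 2 ^ (i : ℕ) := by positivity
    omega
  · have := rowIdx_insert hiq
    have := rowIdx_insert hjq
    have : 2 ^ (j : ℕ) < 2 ^ (i : ℕ) := Nat.pow_lt_pow_right (by norm_num) hji
    omega

lemma sum_two_pow_lt_of_lt_two_pow_succ {N : Finset (Fin n)} {a : Fin n} (ha : a ∉ N)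
    (h : ∑ i ∈ N, 2 ^ (i : ℕ) < 2 ^ ((a : ℕ) + 1)) : ∑ i ∈ N, 2 ^ (i : ℕ) < 2 ^ (a : ℕ) := by
  have hlt : ∀ i ∈ N, i < a := by
    intro i hi
    refine lt_of_le_of_ne (not_lt.1 fun hai => ?_) (ne_of_mem_of_not_mem hi ha)
    have : 2 ^ (i : ℕ) ≤ ∑ i ∈ N, 2 ^ (i : ℕ) :=
      single_le_sum (f := fun i : Fin n => 2 ^ (i : ℕ)) (fun _ _ => Nat.zero_le _) hi
    have : 2 ^ ((a : ℕ) + 1) ≤ 2 ^ (i : ℕ) := Nat.pow_le_pow_right (by norm_num) hai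
    omega
  simpa using Nat.geomSum_lt (m := 2) (n := a) (s := N.map Fin.valEmbedding) le_rfl
    (by simpa using hlt)

lemma mcoeff_add (f g : BF n) (S : Mon n) :
    mcoeff (fun x => f x + g x) S = mcoeff f S + mcoeff g S :=
  sum_add_distrib

lemma mcoeff_const_mul (c : ZMod 2) (f : BF n) (S : Mon n) :
    mcoeff (fun x => c * f x) S = c * mcoeff f S :=
  (mul_sum _ _ _).symm

lemma mcoeff_sum {ι : Type*} (s : Finset ι) (F : ι → BF n) (S : Mon n) :
    mcoeff (fun x => ∑ t ∈ s, F t x) S = ∑ t ∈ s, mcoeff (F t) S :=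
  sum_comm

-- If `i ∈ S \ g`, flipping the `i`-th coordinate pairs off the terms of the sum.
lemma mcoeff_evm_of_ne {g S : Mon n} (h : S ≠ g) : mcoeff (evm g) S = 0 := by
  obtain ⟨i, hi⟩ : ∃ i, ¬(i ∈ g ↔ i ∈ S) := by
    by_contra! h'
    exact h (Finset.ext fun i => (h' i).symm)
  by_cases hig : i ∈ g
  · have hiS : i ∉ S := by tauto
    exact sum_eq_zero fun x hx => prod_eq_zero hig ((mem_filter.1 hx).2 i hiS)
  · have hiS : i ∈ S := by tauto
    refine sum_involution (fun x _ => Function.update x i (x i + 1)) (fun x _ => ?_)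
      (fun x _ _ => ?_) (fun x hx => ?_) (fun x _ => ?_)
    · have : evm g (Function.update x i (x i + 1)) = evm g x :=
        prod_congr rfl fun j hj => Function.update_of_ne (ne_of_mem_of_not_mem hj hig) _ _
      rw [this, CharTwo.add_self_eq_zero]
    · intro hx
      have := congrFun hx i
      simp at this
    · refine mem_filter.2 ⟨mem_univ _, fun j hj => ?_⟩
      rw [Function.update_of_ne (ne_of_mem_of_not_mem hiS hj).symm]
      exact (mem_filter.1 hx).2 j hj
    · simp [add_assoc, CharTwo.add_self_eq_zero]

lemma evm_mul_apply (s : Mon n) (t : Fin n) (x : Pt n) :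
    evm s x * x t = evm (insert t s) x := by
  by_cases h : t ∈ s
  · have hxt : x t * x t = x t := by generalize x t = y; revert y; decide
    rw [insert_eq_of_mem h, evm, ← prod_erase_mul _ _ h, mul_assoc, hxt]
  · rw [evm, evm, prod_insert h, mul_comm]

namespace LTA

variable (L : LTA n)

lemma actPt_apply (x : Pt n) (i : Fin n) :
    L.actPt x i = x i + ∑ t ∈ univ.erase i, L.A i t * x t + L.b i := by
  simp only [actPt, Pi.add_apply, Matrix.mulVec, dotProduct]
  rw [← add_sum_erase _ _ (mem_univ i), L.diag, one_mul]

def FixesCoord (i : Fin n) : Prop := (∀ t, t ≠ i → L.A i t = 0) ∧ L.b i = 0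

variable {L}

lemma actPt_apply_of_fixesCoord {i : Fin n} (h : L.FixesCoord i) (x : Pt n) :
    L.actPt x i = x i := by
  rw [actPt_apply, sum_eq_zero fun t ht => by rw [h.1 t (ne_of_mem_erase ht), zero_mul], h.2]
  simp

lemma act_evm_of_fixesCoord {s : Mon n} (h : ∀ i ∈ s, L.FixesCoord i) :
    L.act (evm s) = evm s :=
  funext fun x => prod_congr rfl fun i hi => actPt_apply_of_fixesCoord (h i hi) x

lemma act_evm_insert {s : Mon n} {a : Fin n} (hs : ∀ i ∈ s, L.FixesCoord i) (ha : a ∉ s) :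
    L.act (evm (insert a s)) = fun x => evm (insert a s) x +
      ∑ t ∈ univ.erase a, L.A a t * evm (insert t s) x + L.b a * evm s x := by
  funext x
  change ∏ i ∈ insert a s, L.actPt x i = _
  have hs' : ∏ i ∈ s, L.actPt x i = evm s x := congrFun (act_evm_of_fixesCoord hs) x
  rw [prod_insert ha, hs', actPt_apply]
  simp only [← evm_mul_apply, add_mul, sum_mul]
  congr 2
  · exact mul_comm _ _
  · exact sum_congr rfl fun t _ => by ring

lemma mcoeff_act_evm_insert_eq_zero {s S : Mon n} {a : Fin n} (hs : ∀ i ∈ s, L.FixesCoord i)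
    (ha : a ∉ s) (hSa : S ≠ insert a s) (hSt : ∀ t, t ≠ a → L.A a t ≠ 0 → S ≠ insert t s)
    (hSb : L.b a ≠ 0 → S ≠ s) : mcoeff (L.act (evm (insert a s))) S = 0 := by
  rw [act_evm_insert hs ha]
  simp only [mcoeff_add, mcoeff_sum, mcoeff_const_mul, mcoeff_evm_of_ne hSa, zero_add]
  rw [sum_eq_zero fun t ht => mul_eq_zero.2 <| (eq_or_ne _ 0).imp_right fun hA =>
      mcoeff_evm_of_ne (hSt t (ne_of_mem_erase ht) hA),
    mul_eq_zero.2 <| (eq_or_ne _ 0).imp_right fun hb => mcoeff_evm_of_ne (hSb hb), add_zero]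

end LTA

namespace Setup

variable {C : Setup n} {L : LTA n}

lemma inter_subset_of_notMem_D {f : Mon n} (hf : f ∈ C.O1 ∪ C.O2) (hD : f ∉ C.D) :
    C.h1 ∩ C.h2 ⊆ f :=
  not_not.1 fun h => hD ⟨hf, h⟩

lemma rowIdx_h2_lt_of_mem_O1 {f : Mon n} (hf : f ∈ C.O1) : rowIdx C.h2 < rowIdx f := hf.2.2.1

lemma Mem.notMem_h2_and_mem_of_A_ne_zero (hL : C.Mem L) {i t : Fin n} (hi : i ∈ C.h1)
    (hti : t ≠ i) (hA : L.A i t ≠ 0) :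
    i ∉ C.h2 ∧ insert t (C.h1.erase i) ∈ (C.O1 \ C.O2) \ C.D := by
  have hlt : t < i := lt_of_le_of_ne (not_lt.1 fun h => hA (L.lower i t h)) hti
  have hK : ∀ q : Mon n, i ∉ q → insert t q ∈ C.O1 ∪ C.O2 → insert t q ∉ C.D → i ∉ C.h2 :=
    fun q hiq hf hD hi2 => by
      have := inter_subset_of_notMem_D hf hD (mem_inter.2 ⟨hi, hi2⟩)
      rw [mem_insert] at this
      tauto
  rcases hL.1 i t hlt hA with ⟨f, hf, q, hiq, -, hh1, rfl⟩ | ⟨f, hf, q, hiq, -, hh2, rfl⟩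
  · refine ⟨hK q hiq (Or.inl hf.1.1) hf.2, ?_⟩
    rwa [hh1, erase_insert hiq]
  · exact absurd (hh2 ▸ mem_insert_self i q) (hK q hiq (Or.inr hf.1.1) hf.2)

lemma Mem.notMem_h2_and_mem_of_b_ne_zero (hL : C.Mem L) {i : Fin n} (hi : i ∈ C.h1)
    (hb : L.b i ≠ 0) : i ∉ C.h2 ∧ C.h1.erase i ∈ (C.O1 \ C.O2) \ C.D := by
  have hK : ∀ f : Mon n, i ∉ f → f ∈ C.O1 ∪ C.O2 → f ∉ C.D → i ∉ C.h2 :=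
    fun f hif hf hD hi2 => hif (inter_subset_of_notMem_D hf hD (mem_inter.2 ⟨hi, hi2⟩))
  rcases hL.2 i hb with ⟨f, hf, hif, hh1⟩ | ⟨f, hf, hif, hh2⟩
  · refine ⟨hK f hif (Or.inl hf.1.1) hf.2, ?_⟩
    rwa [hh1, erase_insert hif]
  · exact absurd (hh2 ▸ mem_insert_self i f) (hK f hif (Or.inr hf.1.1) hf.2)

lemma Mem.fixesCoord_of_mem_h2 (hL : C.Mem L) {i : Fin n} (hi1 : i ∈ C.h1) (hi2 : i ∈ C.h2) :
    L.FixesCoord i :=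
  ⟨fun _ ht => not_not.1 fun hA => (hL.notMem_h2_and_mem_of_A_ne_zero hi1 ht hA).1 hi2,
    not_not.1 fun hb => (hL.notMem_h2_and_mem_of_b_ne_zero hi1 hb).1 hi2⟩

lemma Mem.exists_superset_erase_of_not_fixesCoord (hL : C.Mem L) {i : Fin n} (hi : i ∈ C.h1)
    (hfix : ¬ L.FixesCoord i) : ∃ f ∈ (C.O1 \ C.O2) \ C.D, C.h1.erase i ⊆ f := by
  by_cases hb : L.b i = 0
  · obtain ⟨t, hti, hA⟩ : ∃ t, t ≠ i ∧ L.A i t ≠ 0 := by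
      by_contra! h
      exact hfix ⟨h, hb⟩
    exact ⟨_, (hL.notMem_h2_and_mem_of_A_ne_zero hi hti hA).2, subset_insert _ _⟩
  · exact ⟨_, (hL.notMem_h2_and_mem_of_b_ne_zero hi hb).2, subset_rfl⟩

-- With `h1 ∖ h2 = {a, c}`, `[h1] < [h2]` forces `∑_{h2 ∖ h1} 2^i < 2^a`, so `[h2] > [h1] + 2^c`,
-- while substituting `c` only reaches monomials of row index at most `[h1] + 2^c`.
lemma Mem.fixesCoord_of_lt (hL : C.Mem L) {a c : Fin n} (ha : a ∈ C.h1 \ C.h2)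
    (hc : c ∈ C.h1 \ C.h2) (hca : c < a) : L.FixesCoord c := by
  by_contra hfix
  obtain ⟨f, hf, hcf⟩ := hL.exists_superset_erase_of_not_fixesCoord (mem_sdiff.1 hc).1 hfix
  have hE : C.h1 \ C.h2 = {a, c} :=
    (eq_of_subset_of_card_le (insert_subset ha (singleton_subset_iff.2 hc))
      (by rw [card_pair (ne_of_gt hca)]; exact C.feas1)).symm
  have hK1 := rowIdx_eq_add_of_subset (inter_subset_left : C.h1 ∩ C.h2 ⊆ C.h1)
  have hK2 := rowIdx_eq_add_of_subset (inter_subset_right : C.h1 ∩ C.h2 ⊆ C.h2)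
  rw [sdiff_inter_self_left, hE, sum_pair (ne_of_gt hca)] at hK1
  rw [sdiff_inter_self_right] at hK2
  have hpow : 2 ^ (c : ℕ) < 2 ^ (a : ℕ) := Nat.pow_lt_pow_right (by norm_num) hca
  have hN : ∑ i ∈ C.h2 \ C.h1, 2 ^ (i : ℕ) < 2 ^ (a : ℕ) := by
    refine sum_two_pow_lt_of_lt_two_pow_succ (fun h => (mem_sdiff.1 h).2 (mem_sdiff.1 ha).1) ?_
    have := C.h12
    rw [pow_succ]
    omega
  have hc1 := rowIdx_insert (notMem_erase c C.h1)
  rw [insert_erase (mem_sdiff.1 hc).1] at hc1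
  have := rowIdx_le_of_subset hcf
  have := rowIdx_h2_lt_of_mem_O1 hf.1.1
  omega

lemma Mem.eq_of_not_fixesCoord (hL : C.Mem L) {a c : Fin n} (ha : a ∈ C.h1) (hc : c ∈ C.h1)
    (hfa : ¬ L.FixesCoord a) (hfc : ¬ L.FixesCoord c) : a = c := by
  have ha' : a ∈ C.h1 \ C.h2 := mem_sdiff.2 ⟨ha, fun h => hfa (hL.fixesCoord_of_mem_h2 ha h)⟩
  have hc' : c ∈ C.h1 \ C.h2 := mem_sdiff.2 ⟨hc, fun h => hfc (hL.fixesCoord_of_mem_h2 hc h)⟩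
  rcases lt_trichotomy a c with h | h | h
  · exact absurd (hL.fixesCoord_of_lt hc' ha' h) hfa
  · exact h
  · exact absurd (hL.fixesCoord_of_lt ha' hc' h) hfc

lemma ne_h1_and_notMem_of_mem_target {S : Mon n}
    (hS : S = C.h2 ∨ S ∈ ((C.O1 \ C.O2) ∩ C.D) ∪ (C.O1 ∩ C.O2) ∪ ((C.O2 \ C.O1) \ C.D)) :
    S ≠ C.h1 ∧ S ∉ (C.O1 \ C.O2) \ C.D := by
  have h12 := C.h12
  rcases hS with rfl | (⟨-, hD⟩ | ⟨hO1, hO2⟩) | ⟨⟨hO2, hO1⟩, -⟩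
  · exact ⟨fun h => h12.ne (congrArg rowIdx h).symm,
      fun h => lt_irrefl _ (rowIdx_h2_lt_of_mem_O1 h.1.1)⟩
  · exact ⟨fun h => hD.2 (h ▸ inter_subset_left), fun h => h.2 hD⟩
  · exact ⟨fun h => by have := rowIdx_h2_lt_of_mem_O1 hO1; rw [h] at this; omega,
      fun h => h.1.2 hO2⟩
  · exact ⟨fun h => by have := hO2.2.1.rowIdx_lt; rw [h] at this; omega, fun h => hO1 h.1.1⟩

end Setup

/-- for `(A,b) ∈ LTA(n,2)_{h2}^{h1}`, the coefficient of `(A,b)·h1` vanishes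
at `h2` and at every monomial of `((O_{h1}∖O_{h2})∩D) ∪ (O_{h1}∩O_{h2}) ∪ (O_{h2}∖O_{h1}∖D)`. -/
theorem stmt5 {n : ℕ} (C : Setup n) (L : LTA n) (hL : C.Mem L) :
    mcoeff (L.act (evm C.h1)) C.h2 = 0 ∧
    ∀ f ∈ (((C.O1 \ C.O2) ∩ C.D) ∪ (C.O1 ∩ C.O2) ∪ ((C.O2 \ C.O1) \ C.D)),
      mcoeff (L.act (evm C.h1)) f = 0 := by
  suffices H : ∀ S, S ≠ C.h1 ∧ S ∉ (C.O1 \ C.O2) \ C.D → mcoeff (L.act (evm C.h1)) S = 0 from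
    ⟨H _ (C.ne_h1_and_notMem_of_mem_target (Or.inl rfl)),
      fun f hf => H f (C.ne_h1_and_notMem_of_mem_target (Or.inr hf))⟩
  rintro S ⟨hS1, hSX⟩
  by_cases hfix : ∀ i ∈ C.h1, L.FixesCoord i
  · rw [L.act_evm_of_fixesCoord hfix]
    exact mcoeff_evm_of_ne hS1
  obtain ⟨a, ha, hfa⟩ : ∃ a ∈ C.h1, ¬ L.FixesCoord a := by simpa using hfix
  have hfix' : ∀ i ∈ C.h1.erase a, L.FixesCoord i := fun i hi => not_not.1 fun h =>
    ne_of_mem_erase hi (hL.eq_of_not_fixesCoord (mem_of_mem_erase hi) ha h hfa)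
  rw [← insert_erase ha] at hS1 ⊢
  refine L.mcoeff_act_evm_insert_eq_zero hfix' (notMem_erase a _) hS1 ?_ ?_
  · exact fun t ht hA h => hSX (h ▸ (hL.notMem_h2_and_mem_of_A_ne_zero ha ht hA).2)
  · exact fun hb h => hSX (h ▸ (hL.notMem_h2_and_mem_of_b_ne_zero ha hb).2)
end

section
/- For every (A,b) ∈ LTA(n,2)_{h2}^{h1} and every f ∈ O_{h2}∖O_{h1}∖D, the coefficient ⟨(A,b)·h2⟩_f equals the corresponding free parameter of the group element: it equals b_r if h2 = f·x_r, and it equals a_{s,t} if h2 = q·x_s and f = q·x_t with t < s. -/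
open Finset

variable {n : ℕ}

/-!
On the subcube `{x : supp x ⊆ ind f}` the coefficient `⟨F⟩_f` is `∑ F x`. No free parameter
`a_{i,j}` of `LTA(n,2)_{h2}^{h1}` has both `i, j ∈ ind h2`: for `h1 = q·x_i` the partner
`f = q·x_j ∈ O_{h1} ∖ D` would have to contain `i ∈ ind h1 ∩ ind h2`, and for `h2 = q·x_i` the
partner `q·x_j` has `j ∉ ind h2`. So `A` is the identity on `ind h2`, and on the subcube
`(A,b)·h2` is `∏_{i ∈ h2} (x_i + b_i)`, whose sum factorises coordinatewise: each coordinate of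
`f` contributes `∑_v (v + b_i) = 1`, every other one `b_i`. This gives `b_r` when `h2 = f·x_r`.
When `f = q·x_t` with `t ∉ ind h2`, summing over `x_t` last replaces `b` by `b + x_t·A e_t`,
leaving `∑_{x_t} (b_s + a_{s,t} x_t) = a_{s,t}`.
-/

open scoped Matrix

section Subcube

variable {ι K : Type*} [Fintype ι] [DecidableEq ι] [Fintype K] [DecidableEq K]

def subcube [Zero K] (S : Finset ι) : Finset (ι → K) := univ.filter fun x => ∀ i ∉ S, x i = 0

theorem mem_subcube [Zero K] {S : Finset ι} {x : ι → K} :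
    x ∈ subcube S ↔ ∀ i ∉ S, x i = 0 := by
  simp [subcube]

theorem subcube_eq_piFinset [Zero K] (S : Finset ι) :
    subcube S = Fintype.piFinset fun i => if i ∈ S then (univ : Finset K) else {0} := by
  ext x
  simp only [mem_subcube, Fintype.mem_piFinset]
  refine forall_congr' fun i => ?_
  split_ifs with h <;> simp [h]

theorem sum_subcube_prod [Zero K] {M : Type*} [CommSemiring M] {S T : Finset ι} (hST : S ⊆ T)
    (g : ι → K → M) :
    ∑ x ∈ subcube S, ∏ i ∈ T, g i (x i) = ∏ i ∈ T, if i ∈ S then ∑ v, g i v else g i 0 := by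
  have hfactor : ∀ x : ι → K, ∏ i ∈ T, g i (x i) = ∏ i, if i ∈ T then g i (x i) else 1 := by
    intro x
    rw [prod_ite_mem, univ_inter]
  have hfiber : ∀ i, (∑ v ∈ if i ∈ S then univ else {0}, if i ∈ T then g i v else 1) =
      if i ∈ T then (if i ∈ S then ∑ v, g i v else g i 0) else 1 := by
    intro i
    by_cases hT : i ∈ T
    · by_cases hS : i ∈ S <;> simp [hS, hT]
    · simp [hT, show i ∉ S from fun h => hT (hST h)]
  rw [sum_congr rfl fun x _ => hfactor x, subcube_eq_piFinset,
    ← prod_univ_sum _ fun i v => if i ∈ T then g i v else 1, prod_congr rfl fun i _ => hfiber i,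
    prod_ite_mem, univ_inter]

theorem sum_subcube_insert [AddZeroClass K] {M : Type*} [AddCommMonoid M] {S : Finset ι} {t : ι}
    (ht : t ∉ S) (F : (ι → K) → M) :
    ∑ x ∈ subcube (insert t S), F x = ∑ v, ∑ y ∈ subcube S, F (y + Pi.single t v) := by
  have hsplit : ∀ x : ι → K, Function.update x t 0 + Pi.single t (x t) = x := by
    intro x
    ext i
    by_cases hit : i = t <;> simp [hit]
  rw [← sum_product']
  refine sum_nbij' (fun x => (x t, Function.update x t 0)) (fun p => p.2 + Pi.single t p.1)
    ?_ ?_ (fun x _ => hsplit x) ?_ (fun x _ => by rw [hsplit])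
  · simp +contextual [mem_subcube, Function.update_apply]
  · simp +contextual [mem_subcube]
  · rintro ⟨v, y⟩ hy
    have hyt : y t = 0 := mem_subcube.mp (mem_product.mp hy).2 t ht
    refine Prod.ext (by simp [hyt]) (funext fun i => ?_)
    by_cases hit : i = t <;> simp [hit, hyt]

end Subcube

theorem Matrix.mulVec_apply_eq_self_of_block_eq_one {ι R : Type*} [Fintype ι] [DecidableEq ι]
    [NonAssocSemiring R] {A : Matrix ι ι R} {T : Finset ι}
    (hA : ∀ i ∈ T, ∀ j ∈ T, A i j = (1 : Matrix ι ι R) i j) {x : ι → R}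
    (hx : ∀ j ∉ T, x j = 0) {i : ι} (hi : i ∈ T) : (A *ᵥ x) i = x i :=
  calc (A *ᵥ x) i = ∑ j ∈ T, A i j * x j :=
        (sum_subset (subset_univ T) fun j _ hj => by rw [hx j hj, mul_zero]).symm
    _ = ∑ j ∈ T, (1 : Matrix ι ι R) i j * x j := sum_congr rfl fun j hj => by rw [hA i hi j hj]
    _ = x i := by simp [Matrix.one_apply, hi]

section ZModTwo

variable {ι : Type*} [Fintype ι] [DecidableEq ι]

theorem sum_subcube_prod_add {S T : Finset ι} (hST : S ⊆ T) (c : ι → ZMod 2) :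
    ∑ x ∈ subcube S, ∏ i ∈ T, (x i + c i) = ∏ i ∈ T \ S, c i := by
  have hfiber : ∀ a : ZMod 2, ∑ v, (v + a) = 1 := by decide
  rw [sum_subcube_prod hST fun i v => v + c i]
  simp [hfiber, prod_ite, filter_notMem_eq_sdiff]

theorem sum_subcube_prod_mulVec_add {A : Matrix ι ι (ZMod 2)} {S T : Finset ι}
    (hA : ∀ i ∈ T, ∀ j ∈ T, A i j = (1 : Matrix ι ι (ZMod 2)) i j) (hST : S ⊆ T)
    (c : ι → ZMod 2) :
    ∑ x ∈ subcube S, ∏ i ∈ T, ((A *ᵥ x) i + c i) = ∏ i ∈ T \ S, c i := by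
  rw [← sum_subcube_prod_add hST c]
  refine sum_congr rfl fun x hx => prod_congr rfl fun i hi => ?_
  rw [A.mulVec_apply_eq_self_of_block_eq_one hA
    (fun j hj => mem_subcube.mp hx j fun h => hj (hST h)) hi]

end ZModTwo

theorem mcoeff_eq_sum_subcube (F : BF n) (S : Mon n) : mcoeff F S = ∑ x ∈ subcube S, F x := by
  -- the two filters differ only in their decidability instances
  unfold mcoeff subcube
  congr

theorem LTA.act_evm_apply (L : LTA n) (T : Mon n) (x : Pt n) :
    L.act (evm T) x = ∏ i ∈ T, ((L.A *ᵥ x) i + L.b i) := rfl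

theorem LTA.mcoeff_act_evm_of_subset (L : LTA n) {S T : Mon n}
    (hA : ∀ i ∈ T, ∀ j ∈ T, L.A i j = (1 : Matrix (Fin n) (Fin n) (ZMod 2)) i j) (hST : S ⊆ T) :
    mcoeff (L.act (evm T)) S = ∏ i ∈ T \ S, L.b i := by
  simp only [mcoeff_eq_sum_subcube, L.act_evm_apply]
  exact sum_subcube_prod_mulVec_add hA hST L.b

theorem LTA.mcoeff_act_evm_insert_of_subset (L : LTA n) {S T : Mon n} {t : Fin n}
    (hA : ∀ i ∈ T, ∀ j ∈ T, L.A i j = (1 : Matrix (Fin n) (Fin n) (ZMod 2)) i j) (hST : S ⊆ T)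
    (ht : t ∉ S) :
    mcoeff (L.act (evm T)) (insert t S) = ∑ v, ∏ i ∈ T \ S, (L.b i + L.A i t * v) := by
  rw [mcoeff_eq_sum_subcube, sum_subcube_insert ht]
  refine sum_congr rfl fun v _ => ?_
  rw [← sum_subcube_prod_mulVec_add hA hST]
  refine sum_congr rfl fun y _ => ?_
  rw [L.act_evm_apply]
  refine prod_congr rfl fun i _ => ?_
  simp only [Matrix.mulVec_add, Matrix.mulVec_single, op_smul_eq_smul, Pi.add_apply,
    Pi.smul_apply, Matrix.col_apply, smul_eq_mul]
  ring

theorem Setup.Mem.A_eq_one_on_h2 {C : Setup n} {L : LTA n} (hL : C.Mem L) :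
    ∀ i ∈ C.h2, ∀ j ∈ C.h2, L.A i j = (1 : Matrix (Fin n) (Fin n) (ZMod 2)) i j := by
  intro i hi j hj
  rcases lt_trichotomy i j with hij | rfl | hij
  · rw [L.lower i j hij, Matrix.one_apply_ne hij.ne]
  · rw [L.diag, Matrix.one_apply_eq]
  · rw [Matrix.one_apply_ne hij.ne']
    by_contra hA
    rcases hL.1 i j hij hA with ⟨f, hf, q, hiq, -, hh1, rfl⟩ | ⟨-, -, q, hiq, hjq, hh2, -⟩
    · have hsub : C.h1 ∩ C.h2 ⊆ insert j q := not_not.mp fun h => hf.2 ⟨Or.inl hf.1.1, h⟩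
      have hi' := hsub (mem_inter.mpr ⟨hh1 ▸ mem_insert_self i q, hi⟩)
      simp [hij.ne', hiq] at hi'
    · rw [hh2] at hj
      simp [hij.ne, hjq] at hj

theorem stmt6_general {n : ℕ} (C : Setup n) (L : LTA n) (hL : C.Mem L)
    (f : Mon n) :
    (∀ r : Fin n, r ∉ f → C.h2 = insert r f → mcoeff (L.act (evm C.h2)) f = L.b r) ∧
    (∀ (q : Mon n) (s t : Fin n), s ∉ q → t ∉ q → t < s →
      C.h2 = insert s q → f = insert t q → mcoeff (L.act (evm C.h2)) f = L.A s t) := by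
  have hA := hL.A_eq_one_on_h2
  constructor
  · intro r hr hh2
    rw [L.mcoeff_act_evm_of_subset hA (hh2 ▸ subset_insert r f), hh2,
      insert_sdiff_cancel hr, prod_singleton]
  · intro q s t hs ht _ hh2 rfl
    have hlinear : ∀ a b : ZMod 2, ∑ v, (b + a * v) = a := by decide
    rw [L.mcoeff_act_evm_insert_of_subset hA (hh2 ▸ subset_insert s q) ht, hh2,
      insert_sdiff_cancel hs]
    simpa only [prod_singleton] using hlinear (L.A s t) (L.b s)

/-- for `(A,b) ∈ LTA(n,2)_{h2}^{h1}` and `f ∈ O_{h2}∖O_{h1}∖D`, the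
coefficient `⟨(A,b)·h2⟩_f` equals the corresponding free parameter: `b_r` if `h2 = f·x_r`,
and `a_{s,t}` if `h2 = q·x_s`, `f = q·x_t` with `t < s`. -/
theorem stmt6 {n : ℕ} (C : Setup n) (L : LTA n) (hL : C.Mem L)
    (f : Mon n) (hf : f ∈ ((C.O2 \ C.O1) \ C.D)) :
    (∀ r : Fin n, r ∉ f → C.h2 = insert r f → mcoeff (L.act (evm C.h2)) f = L.b r) ∧
    (∀ (q : Mon n) (s t : Fin n), s ∉ q → t ∉ q → t < s →
      C.h2 = insert s q → f = insert t q → mcoeff (L.act (evm C.h2)) f = L.A s t) :=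
  stmt6_general C L hL f
end

section
/- For every f ∈ O_{h1}∖O_{h2}∖D, the coefficient ⟨(A,b)·h2⟩_f depends only on the free parameters of (A,b) associated with O_{h2}∖O_{h1}∖D: if (A,b), (A′,b′) ∈ LTA(n,2)_{h2}^{h1} have equal values on all entries associated with O_{h2}∖O_{h1}∖D in the definition of the subgroup, then ⟨(A,b)·h2⟩_f = ⟨(A′,b′)·h2⟩_f. -/
open Finset

variable {n : ℕ}

/-! `(A,b)·h2 = ∏_{i ∈ ind(h2)} ((Ax)_i + b_i)` only reads the rows of `(A,b)` indexed by
`ind(h2)`. A free parameter attached to `f ∈ O_{h1}∖O_{h2}∖D` lies in a row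
`s ∈ ind(h1)∖ind(f)`, and `s ∉ ind(h2)` because `∏_{j ∈ ind(h1)∩ind(h2)} x_j` divides `f`.
So in those rows the only possibly nonzero off-diagonal entries are the parameters attached
to `O_{h2}∖O_{h1}∖D`, on which `(A,b)` and `(A',b')` agree. -/

theorem LTA.act_evm_congr {L L' : LTA n} {S : Mon n}
    (hA : ∀ i ∈ S, ∀ j, L.A i j = L'.A i j) (hb : ∀ i ∈ S, L.b i = L'.b i) :
    L.act (evm S) = L'.act (evm S) := by
  funext x
  refine Finset.prod_congr rfl fun i hi => ?_
  change L.A.mulVec x i + L.b i = L'.A.mulVec x i + L'.b i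
  rw [hb i hi, Matrix.mulVec, Matrix.mulVec, dotProduct, dotProduct]
  simp only [hA i hi]

namespace Setup

variable (C : Setup n)

theorem inter_subset_of_mem_O1_diff {f : Mon n} (hf : f ∈ (C.O1 \ C.O2) \ C.D) :
    C.h1 ∩ C.h2 ⊆ f := by
  by_contra h
  exact hf.2 ⟨Or.inl hf.1.1, h⟩

theorem notMem_h2_of_mem_O1_diff {f : Mon n} (hf : f ∈ (C.O1 \ C.O2) \ C.D) {s : Fin n}
    (hs : s ∈ C.h1) (hsf : s ∉ f) : s ∉ C.h2 := fun hs2 =>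
  hsf (C.inter_subset_of_mem_O1_diff hf (Finset.mem_inter.2 ⟨hs, hs2⟩))

variable {C} {L L' : LTA n}

theorem Mem.exists_of_A_ne_zero (hL : C.Mem L) {i j : Fin n} (hi : i ∈ C.h2) (hji : j < i)
    (hA : L.A i j ≠ 0) :
    ∃ f ∈ (C.O2 \ C.O1) \ C.D, ∃ q : Mon n, i ∉ q ∧ j ∉ q ∧ C.h2 = insert i q ∧
      f = insert j q := by
  refine (hL.1 i j hji hA).resolve_left ?_
  rintro ⟨f, hf, q, hiq, -, hh1, rfl⟩
  refine C.notMem_h2_of_mem_O1_diff hf (hh1 ▸ Finset.mem_insert_self i q) ?_ hi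
  simpa [Finset.mem_insert, hji.ne'] using hiq

theorem Mem.exists_of_b_ne_zero (hL : C.Mem L) {i : Fin n} (hi : i ∈ C.h2) (hb : L.b i ≠ 0) :
    ∃ f ∈ (C.O2 \ C.O1) \ C.D, i ∉ f ∧ C.h2 = insert i f := by
  refine (hL.2 i hb).resolve_left ?_
  rintro ⟨f, hf, hif, hh1⟩
  exact C.notMem_h2_of_mem_O1_diff hf (hh1 ▸ Finset.mem_insert_self i f) hif hi

theorem agreeO2.A_eq (hagree : C.agreeO2 L L') (hL : C.Mem L) (hL' : C.Mem L')
    {i : Fin n} (hi : i ∈ C.h2) (j : Fin n) : L.A i j = L'.A i j := by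
  rcases lt_trichotomy j i with hji | rfl | hij
  · by_cases h0 : L.A i j = 0 ∧ L'.A i j = 0
    · exact h0.1.trans h0.2.symm
    obtain ⟨f, hf, q, hiq, hjq, hh2, hfq⟩ :=
      (not_and_or.1 h0).elim (hL.exists_of_A_ne_zero hi hji) (hL'.exists_of_A_ne_zero hi hji)
    exact hagree.1 f hf q i j hiq hjq hji hh2 hfq
  · rw [L.diag, L'.diag]
  · rw [L.lower i j hij, L'.lower i j hij]

theorem agreeO2.b_eq (hagree : C.agreeO2 L L') (hL : C.Mem L) (hL' : C.Mem L')
    {i : Fin n} (hi : i ∈ C.h2) : L.b i = L'.b i := by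
  by_cases h0 : L.b i = 0 ∧ L'.b i = 0
  · exact h0.1.trans h0.2.symm
  obtain ⟨f, hf, hif, hh2⟩ :=
    (not_and_or.1 h0).elim (hL.exists_of_b_ne_zero hi) (hL'.exists_of_b_ne_zero hi)
  exact hagree.2 f hf i hif hh2

end Setup

theorem stmt8_general {n : ℕ} (C : Setup n) (f : Mon n)
    (L L' : LTA n) (hL : C.Mem L) (hL' : C.Mem L') (hagree : C.agreeO2 L L') :
    mcoeff (L.act (evm C.h2)) f = mcoeff (L'.act (evm C.h2)) f := by
  rw [LTA.act_evm_congr (fun i hi => hagree.A_eq hL hL' hi) (fun i hi => hagree.b_eq hL hL' hi)]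

/-- for `f ∈ O_{h1}∖O_{h2}∖D`, the coefficient `⟨(A,b)·h2⟩_f` depends only on
the free parameters of `(A,b)` associated with `O_{h2}∖O_{h1}∖D`. -/
theorem stmt8 {n : ℕ} (C : Setup n) (f : Mon n) (hf : f ∈ ((C.O1 \ C.O2) \ C.D))
    (L L' : LTA n) (hL : C.Mem L) (hL' : C.Mem L') (hagree : C.agreeO2 L L') :
    mcoeff (L.act (evm C.h2)) f = mcoeff (L'.act (evm C.h2)) f :=
  stmt8_general C f L L' hL hL' hagree
end

section
/- For every f ∈ O^c_{h1} ∩ O^c_{h2} and every g ∈ O_{h1}∖O_{h2}∖D, the coefficient ⟨(A,b)·f⟩_g depends only on the free parameters of (A,b) associated with O_{h2}∖O_{h1}∖D: if (A,b), (A′,b′) ∈ LTA(n,2)_{h2}^{h1} have equal values on all entries associated with O_{h2}∖O_{h1}∖D in the definition of the subgroup, then ⟨(A,b)·f⟩_g = ⟨(A′,b′)·f⟩_g. -/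
open Finset

variable {n : ℕ}

/-! Expanding `(A,b)·∏_{i∈f} x_i = ∏_{i∈f} (b_i + ∑_t a_{i,t} x_t)`, the coefficient of `g` is
a sum, over the ways of picking one term in each factor with product `g`, of products of entries
of `(A,b)`.  In a nonzero product every entry is diagonal or a free parameter of the subgroup, so
it suffices that no parameter attached to `O_{h1}∖O_{h2}∖D` occurs.

Since `g ≺_o h1` and `h1 ∩ h2 ∣ g`, we have `h1/x_i ∣ g` for some `i ∈ ind(h1)∖ind(h2)`.  Every
other variable `x_u` of `h1` must come from its own factor: taking it from a factor `r > u`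
through a parameter attached to `h2` makes `p = x_u·h2/x_r ∈ O_{h2}∖O_{h1}` with `[h2] < [p]`,
so `p` is not a one-variable descendant of `h1`; but `|ind(h1)∖ind(h2)| ≤ 2`,
`|ind(h2)∖ind(h1)| ≤ 2` and `[h1] < [h2]` force `p ≺_o h1`.  A parameter attached to `h1` sits in
a row `s ∈ ind(h1)` and picks no variable of `h1`, so `s = i`; then `h1 ∣ f`, contradicting
`[h1] < [h2] < [f]`. -/

lemma Finset.eq_insert_insert_inter {α : Type*} [DecidableEq α] {s t : Finset α} {a b : α}
    (hst : (s \ t).card ≤ 2) (ha : a ∈ s \ t) (hb : b ∈ s \ t) (hab : a ≠ b) :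
    s = insert a (insert b (s ∩ t)) := by
  have hpair : s \ t = {a, b} :=
    (eq_of_subset_of_card_le (insert_subset ha (singleton_subset_iff.2 hb))
      (by rw [card_pair hab]; exact hst)).symm
  conv_lhs => rw [← sdiff_union_inter s t, hpair]
  simp only [insert_union, singleton_union]

lemma Finset.erase_eq_inter_or_insert_inter {α : Type*} [DecidableEq α] {s t : Finset α} {r : α}
    (hst : (s \ t).card ≤ 2) (hr : r ∈ s \ t) :
    s.erase r = s ∩ t ∨ ∃ w ∈ s \ t, s.erase r = insert w (s ∩ t) := by
  by_cases hw : ∃ w ∈ s \ t, w ≠ r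
  · obtain ⟨w, hw, hwr⟩ := hw
    refine Or.inr ⟨w, hw, ?_⟩
    conv_lhs => rw [eq_insert_insert_inter hst hr hw hwr.symm]
    exact erase_insert (by simp [hwr.symm, (mem_sdiff.1 hr).2])
  · push Not at hw
    left
    ext x
    have := hw x
    simp only [mem_erase, mem_inter, mem_sdiff] at this ⊢
    grind

lemma rowIdx_insert_add_two_pow {s : Mon n} {a : Fin n} (ha : a ∉ s) :
    rowIdx (insert a s) + 2 ^ (a : ℕ) = rowIdx s := by
  rw [rowIdx, rowIdx, compl_insert, sum_erase_add _ _ (mem_compl.2 ha)]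

lemma rowIdx_insert_lt_rowIdx_insert {s : Mon n} {a r : Fin n} (ha : a ∉ s) (hr : r ∉ s)
    (har : a < r) : rowIdx (insert r s) < rowIdx (insert a s) := by
  have := rowIdx_insert_add_two_pow ha
  have := rowIdx_insert_add_two_pow hr
  have : 2 ^ (a : ℕ) < 2 ^ (r : ℕ) := Nat.pow_lt_pow_right (by norm_num) har
  omega

lemma rowIdx_le_rowIdx_of_subset {s t : Mon n} (h : s ⊆ t) : rowIdx t ≤ rowIdx s :=
  sum_le_sum_of_subset (compl_subset_compl.2 h)

lemma Ovd.exists_erase_subset {g h : Mon n} (hgh : Ovd g h) : ∃ i ∈ h, i ∉ g ∧ h.erase i ⊆ g := by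
  rcases hgh with ⟨i, hig, rfl⟩ | ⟨q, i, j, hiq, _, hji, rfl, rfl⟩
  · exact ⟨i, mem_insert_self i g, hig, (erase_insert hig).subset⟩
  · refine ⟨i, mem_insert_self i q, by simp [hiq, hji.ne'], ?_⟩
    rw [erase_insert hiq]
    exact subset_insert j q

lemma evm_eq_ite (S : Mon n) (x : Pt n) : evm S x = if ∀ k ∈ S, x k = 1 then 1 else 0 := by
  have hbool : ∀ a : ZMod 2, a = if a = 1 then 1 else 0 := by decide
  rw [evm, prod_congr rfl fun k _ => hbool (x k), prod_boole]
  congr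

lemma evm_biUnion {ι : Type*} (s : Finset ι) (t : ι → Mon n) (x : Pt n) :
    evm (s.biUnion t) x = ∏ i ∈ s, evm (t i) x := by
  simp only [evm_eq_ite, prod_boole, mem_biUnion]
  grind

lemma mcoeff_sum_smul {ι : Type*} (s : Finset ι) (a : ι → ZMod 2) (F : ι → BF n) (g : Mon n) :
    mcoeff (∑ i ∈ s, a i • F i) g = ∑ i ∈ s, a i * mcoeff (F i) g := by
  simp only [mcoeff, Finset.sum_apply, Pi.smul_apply, smul_eq_mul, mul_sum]
  exact sum_comm

lemma mcoeff_eq_sum_mul (F : BF n) (g : Mon n) :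
    mcoeff F g = ∑ x, F x * ∏ i ∈ gᶜ, (1 + x i) := by
  rw [mcoeff, sum_filter]
  refine sum_congr rfl fun x _ => ?_
  split_ifs with hx
  · rw [prod_eq_one fun i hi => by rw [hx i (mem_compl.1 hi), add_zero], mul_one]
  · push Not at hx
    obtain ⟨i, hig, hxi⟩ := hx
    have hflip : ∀ a : ZMod 2, a ≠ 0 → 1 + a = 0 := by decide
    rw [prod_eq_zero (mem_compl.2 hig) (hflip _ hxi), mul_zero]

/-- Binary Möbius inversion of a single monomial: each variable contributes a factor
`∑_{a ∈ F_2} a^[i ∈ S] (1 + a)^[i ∉ g]`, which is `1` iff `i ∈ S ↔ i ∈ g`. -/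
lemma mcoeff_evm (S g : Mon n) : mcoeff (evm S) g = if S = g then 1 else 0 := by
  have hfactor : ∀ i : Fin n,
      ∑ a : ZMod 2, (if i ∈ S then a else 1) * (if i ∈ gᶜ then 1 + a else 1) =
        if (i ∈ S ↔ i ∈ g) then 1 else 0 := by
    intro i
    by_cases hS : i ∈ S <;> by_cases hg : i ∈ g <;> simp [hS, hg] <;> decide
  calc mcoeff (evm S) g
      = ∑ x : Pt n, ∏ i, (if i ∈ S then x i else 1) * (if i ∈ gᶜ then 1 + x i else 1) := by
        simp only [mcoeff_eq_sum_mul, evm, prod_mul_distrib, Fintype.prod_ite_mem]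
    _ = ∏ i : Fin n, if (i ∈ S ↔ i ∈ g) then 1 else 0 := by
        rw [← Fintype.prod_sum fun i a => (if i ∈ S then a else 1) * (if i ∈ gᶜ then 1 + a else 1)]
        exact prod_congr rfl fun i _ => hfactor i
    _ = if S = g then 1 else 0 := by
        simp only [prod_boole, mem_univ, true_implies, ← Finset.ext_iff]

namespace LTA

def coeff (L : LTA n) (s : Fin n) : Option (Fin n) → ZMod 2
  | some t => L.A s t
  | none => L.b s

lemma actPt_apply_s12 (L : LTA n) (x : Pt n) (s : Fin n) :
    L.actPt x s = ∑ o : Option (Fin n), L.coeff s o * evm o.toFinset x := by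
  simp [actPt, coeff, evm, Fintype.sum_option, Matrix.mulVec, dotProduct, add_comm]

end LTA

/-- The monomial obtained by picking, in the factor `(Ax+b)_i` for each `i ∈ f`, the term
`x_t` (`c i = some t`) or the constant (`c i = none`). -/
def pickedMon {f : Mon n} (c : f → Option (Fin n)) : Mon n :=
  univ.biUnion fun i => (c i).toFinset

lemma mem_pickedMon {f : Mon n} {c : f → Option (Fin n)} {t : Fin n} :
    t ∈ pickedMon c ↔ ∃ i, c i = some t := by
  simp [pickedMon]

lemma LTA.act_evm (L : LTA n) (f : Mon n) :
    L.act (evm f) = ∑ c : f → Option (Fin n), (∏ i : f, L.coeff i (c i)) • evm (pickedMon c) := by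
  funext x
  simp only [act, Finset.sum_apply, Pi.smul_apply, smul_eq_mul, pickedMon, evm_biUnion]
  rw [evm, ← prod_coe_sort]
  simp only [actPt_apply_s12, Fintype.prod_sum, prod_mul_distrib]

lemma LTA.mcoeff_act_evm (L : LTA n) (f g : Mon n) :
    mcoeff (L.act (evm f)) g =
      ∑ c : f → Option (Fin n), if pickedMon c = g then ∏ i : f, L.coeff i (c i) else 0 := by
  simp only [L.act_evm, mcoeff_sum_smul, mcoeff_evm, mul_ite, mul_one, mul_zero]

/-- `FreeEntry h P s o`: the entry `a_{s,t}` (`o = some t`) or `b_s` (`o = none`) is a free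
parameter of `LTA(n,2)_{h2}^{h1}` attached to a monomial of `P` relative to `h`. -/
def FreeEntry (h : Mon n) (P : Set (Mon n)) : Fin n → Option (Fin n) → Prop
  | s, some t => t < s ∧ ∃ p ∈ P, ∃ q : Mon n, s ∉ q ∧ t ∉ q ∧ h = insert s q ∧ p = insert t q
  | r, none => ∃ p ∈ P, r ∉ p ∧ h = insert r p

namespace FreeEntry

variable {h : Mon n} {P : Set (Mon n)} {s t : Fin n} {o : Option (Fin n)}

lemma mem (he : FreeEntry h P s o) : s ∈ h := by
  cases o with
  | none => obtain ⟨p, -, -, rfl⟩ := he; exact mem_insert_self s p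
  | some t => obtain ⟨-, p, -, q, -, -, rfl, -⟩ := he; exact mem_insert_self s q

lemma not_mem_some (he : FreeEntry h P s (some t)) : t ∉ h := by
  obtain ⟨hts, p, -, q, -, htq, rfl, -⟩ := he
  simp [hts.ne, htq]

end FreeEntry

lemma InSub.coeff_ne_zero {h1 h2 : Mon n} {O1 O2 D : Set (Mon n)} {L : LTA n}
    (hL : InSub h1 h2 O1 O2 D L) {s : Fin n} {o : Option (Fin n)} (hs : L.coeff s o ≠ 0) :
    o = some s ∨ FreeEntry h1 ((O1 \ O2) \ D) s o ∨ FreeEntry h2 ((O2 \ O1) \ D) s o := by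
  cases o with
  | none => exact Or.inr (hL.2 s hs)
  | some t =>
    rcases lt_trichotomy t s with hts | rfl | hst
    · exact Or.inr ((hL.1 s t hts hs).imp (⟨hts, ·⟩) (⟨hts, ·⟩))
    · exact Or.inl rfl
    · exact absurd (L.lower s t hst) hs

namespace Setup

variable (C : Setup n)

lemma inter_subset_of_mem_O1 {p : Mon n} (hp : p ∈ (C.O1 \ C.O2) \ C.D) : C.h1 ∩ C.h2 ⊆ p := by
  by_contra h
  exact hp.2 ⟨Or.inl hp.1.1, h⟩

lemma inter_subset_of_mem_O2 {p : Mon n} (hp : p ∈ (C.O2 \ C.O1) \ C.D) : C.h1 ∩ C.h2 ⊆ p := by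
  by_contra h
  exact hp.2 ⟨Or.inr hp.1.1, h⟩

lemma not_freeEntry_h2_of_mem_sdiff {a b r : Fin n} (ha : a ∈ C.h1 \ C.h2)
    (hb : b ∈ C.h1 \ C.h2) (hab : a ≠ b) : ¬ FreeEntry C.h2 ((C.O2 \ C.O1) \ C.D) r (some a) := by
  rintro ⟨har, _, hp, q, hrq, haq, hh2, rfl⟩
  set H := C.h1 ∩ C.h2
  have hH : C.h2 ∩ C.h1 = H := inter_comm _ _
  have haH : a ∉ H := fun h => (mem_sdiff.1 ha).2 (mem_inter.1 h).2
  have hbH : b ∉ H := fun h => (mem_sdiff.1 hb).2 (mem_inter.1 h).2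
  have hr2 : r ∈ C.h2 := hh2 ▸ mem_insert_self r q
  have hr1 : r ∉ C.h1 := fun hr1 => by
    simpa [har.ne', hrq] using C.inter_subset_of_mem_O2 hp (mem_inter.2 ⟨hr1, hr2⟩)
  have hnovd : ¬ Ovd (insert a q) C.h1 := fun hovd =>
    hp.1.2 ⟨hp.1.1.1, hovd, hh2 ▸ rowIdx_insert_lt_rowIdx_insert haq hrq har, hp.1.1.2.2⟩
  have hh1 : C.h1 = insert b (insert a H) := by
    rw [insert_comm]; exact eq_insert_insert_inter C.feas1 ha hb hab
  have hq : q = C.h2.erase r := by rw [hh2, erase_insert hrq]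
  rcases erase_eq_inter_or_insert_inter C.feas2 (mem_sdiff.2 ⟨hr2, hr1⟩) with
    hqH | ⟨w, hw, hqw⟩
  · exact hnovd (Or.inl ⟨b, by simp [hab.symm, hbH, hq, hqH, hH], by rw [hq, hqH, hH, hh1]⟩)
  · rw [hH, ← hq] at hqw
    subst hqw
    have hw1 : w ∉ C.h1 := (mem_sdiff.1 hw).2
    have hwH : w ∉ H := fun h => hw1 (mem_inter.1 h).1
    have hwa : w ≠ a := fun h => hw1 (h ▸ (mem_sdiff.1 ha).1)
    have hbaH : b ∉ insert a H := by simp [hab.symm, hbH]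
    have hwaH : w ∉ insert a H := by simp [hwa, hwH]
    rcases lt_or_gt_of_ne (show w ≠ b from fun h => hw1 (h ▸ (mem_sdiff.1 hb).1)) with hwb | hbw
    · exact hnovd (Or.inr ⟨insert a H, b, w, hbaH, hwaH, hwb, hh1, insert_comm _ _ _⟩)
    · have h21 : rowIdx C.h2 < rowIdx C.h1 := calc
          rowIdx C.h2 = rowIdx (insert r (insert w H)) := congrArg rowIdx hh2
          _ < rowIdx (insert a (insert w H)) := rowIdx_insert_lt_rowIdx_insert haq hrq har
          _ = rowIdx (insert w (insert a H)) := by rw [insert_comm]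
          _ < rowIdx (insert b (insert a H)) := rowIdx_insert_lt_rowIdx_insert hbaH hwaH hbw
          _ = rowIdx C.h1 := congrArg rowIdx hh1.symm
      exact (lt_asymm C.h12 h21).elim

variable {C}

lemma agreeO2.symm {L L' : LTA n} (hag : C.agreeO2 L L') : C.agreeO2 L' L :=
  ⟨fun p hp q s t hsq htq hts h2 hpe => (hag.1 p hp q s t hsq htq hts h2 hpe).symm,
    fun p hp r hrp h2 => (hag.2 p hp r hrp h2).symm⟩

lemma agreeO2.coeff_eq {L L' : LTA n} (hag : C.agreeO2 L L') {s : Fin n} {o : Option (Fin n)}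
    (h : o = some s ∨ FreeEntry C.h2 ((C.O2 \ C.O1) \ C.D) s o) :
    L.coeff s o = L'.coeff s o := by
  rcases h with rfl | h
  · simp [LTA.coeff, L.diag, L'.diag]
  · cases o with
    | none => obtain ⟨p, hp, hsp, h2⟩ := h; exact hag.2 p hp s hsp h2
    | some t =>
      obtain ⟨hts, p, hp, q, hsq, htq, h2, hpe⟩ := h
      exact hag.1 p hp q s t hsq htq hts h2 hpe

lemma not_freeEntry_h1_of_pickedMon_eq {f g : Mon n} (hf : rowIdx C.h2 < rowIdx f)
    (hg : g ∈ (C.O1 \ C.O2) \ C.D) {c : f → Option (Fin n)}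
    (hc : ∀ i : f, c i = some ↑i ∨ FreeEntry C.h1 ((C.O1 \ C.O2) \ C.D) i (c i) ∨
      FreeEntry C.h2 ((C.O2 \ C.O1) \ C.D) i (c i))
    (hcg : pickedMon c = g) (s : f) : ¬ FreeEntry C.h1 ((C.O1 \ C.O2) \ C.D) s (c s) := by
  intro hs
  obtain ⟨i, hi1, hig, hsub⟩ := hg.1.1.2.1.exists_erase_subset
  have hi : i ∈ C.h1 \ C.h2 :=
    mem_sdiff.2 ⟨hi1, fun hi2 => hig (C.inter_subset_of_mem_O1 hg (mem_inter.2 ⟨hi1, hi2⟩))⟩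
  have hfix : ∀ u ∈ C.h1.erase i, ∃ hu : u ∈ f, c ⟨u, hu⟩ = some u := by
    intro u hu
    obtain ⟨r, hr⟩ := mem_pickedMon.1 (hcg ▸ hsub hu)
    have hu1 := mem_of_mem_erase hu
    rcases hr ▸ hc r with h | h | h
    · obtain rfl := Option.some.inj h
      exact ⟨r.2, hr⟩
    · exact absurd hu1 h.not_mem_some
    · exact absurd h (C.not_freeEntry_h2_of_mem_sdiff
        (mem_sdiff.2 ⟨hu1, h.not_mem_some⟩) hi (ne_of_mem_erase hu))
  have hs1 : (s : Fin n) ∈ C.h1 := hs.mem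
  by_cases hsi : (s : Fin n) = i
  · have hh1f : C.h1 ⊆ f := fun u hu => by
      by_cases hui : u = i
      · exact hui ▸ hsi ▸ s.2
      · exact (hfix u (mem_erase.2 ⟨hui, hu⟩)).1
    have := rowIdx_le_rowIdx_of_subset hh1f
    have := C.h12
    omega
  · obtain ⟨_, hcs⟩ := hfix s (mem_erase.2 ⟨hsi, hs1⟩)
    exact (hcs ▸ hs).not_mem_some hs1

lemma prod_coeff_eq_of_ne_zero {f g : Mon n} (hf : rowIdx C.h2 < rowIdx f)
    (hg : g ∈ (C.O1 \ C.O2) \ C.D) {L L' : LTA n} (hL : C.Mem L) (hag : C.agreeO2 L L')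
    {c : f → Option (Fin n)} (hcg : pickedMon c = g) (h0 : ∏ i : f, L.coeff i (c i) ≠ 0) :
    ∏ i : f, L.coeff i (c i) = ∏ i : f, L'.coeff i (c i) := by
  have hc := fun i => InSub.coeff_ne_zero hL (prod_ne_zero_iff.1 h0 i (mem_univ i))
  refine prod_congr rfl fun i _ => hag.coeff_eq ?_
  rcases hc i with h | h | h
  · exact Or.inl h
  · exact absurd h (not_freeEntry_h1_of_pickedMon_eq hf hg hc hcg i)
  · exact Or.inr h

lemma prod_coeff_eq {f g : Mon n} (hf : rowIdx C.h2 < rowIdx f)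
    (hg : g ∈ (C.O1 \ C.O2) \ C.D) {L L' : LTA n} (hL : C.Mem L) (hL' : C.Mem L')
    (hag : C.agreeO2 L L') {c : f → Option (Fin n)} (hcg : pickedMon c = g) :
    ∏ i : f, L.coeff i (c i) = ∏ i : f, L'.coeff i (c i) := by
  by_cases h0 : ∏ i : f, L.coeff i (c i) = 0
  · by_cases h0' : ∏ i : f, L'.coeff i (c i) = 0
    · rw [h0, h0']
    · exact (prod_coeff_eq_of_ne_zero hf hg hL' hag.symm hcg h0').symm
  · exact prod_coeff_eq_of_ne_zero hf hg hL hag hcg h0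

end Setup

/-- for `f ∈ O^c_{h1} ∩ O^c_{h2}` and `g ∈ O_{h1}∖O_{h2}∖D`, the coefficient
`⟨(A,b)·f⟩_g` depends only on the free parameters of `(A,b)` associated with
`O_{h2}∖O_{h1}∖D`. -/
theorem stmt12 {n : ℕ} (C : Setup n) (f : Mon n) (hf : f ∈ C.O1c ∩ C.O2c)
    (g : Mon n) (hg : g ∈ ((C.O1 \ C.O2) \ C.D))
    (L L' : LTA n) (hL : C.Mem L) (hL' : C.Mem L') (hagree : C.agreeO2 L L') :
    mcoeff (L.act (evm f)) g = mcoeff (L'.act (evm f)) g := by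
  rw [L.mcoeff_act_evm, L'.mcoeff_act_evm]
  refine sum_congr rfl fun c _ => ?_
  split_ifs with hcg
  · exact Setup.prod_coeff_eq hf.1.2.2.1 hg hL hL' hagree hcg
  · rfl
end
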